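/- arXiv:2409.09490 — 15 statements merged into one kernel-verified Lean document; each statement's English description precedes it below -/
import Mathlib

section
/- Let X be an extremally disconnected space, Y a regular Hausdorff space, and φ : X → Set Y an usco mapping. Then φ has a continuous selection, i.e. there exists a continuous map f : X → Y with f(x) ∈ φ(x) for every x ∈ X. -/
/-- Hasumi's theorem: every usco mapping from an extremally disconnected space
to a regular Hausdorff space has a continuous selection. -/
theorem usco_selection_of_extremallyDisconnected
    {X Y : Type*} [TopologicalSpace X] [T2Space X] [ExtremallyDisconnected X]
    [TopologicalSpace Y] [T2Space Y] [RegularSpace Y]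
    (φ : X → Set Y)
    (hne : ∀ x, (φ x).Nonempty)
    (hcomp : ∀ x, IsCompact (φ x))
    (husc : ∀ U : Set Y, IsOpen U → IsOpen {x | φ x ⊆ U}) :
    ∃ f : X → Y, Continuous f ∧ ∀ x, f x ∈ φ x := by
  classical
  set G : Set (X × Y) := {p | p.2 ∈ φ p.1} with hGdef
  -- the first projection maps closed subsets of G to closed sets
  have keyClosed : ∀ C : Set (X × Y), C ⊆ G → IsClosed C → IsClosed (Prod.fst '' C) := by
    intro C hCG hC
    rw [← isOpen_compl_iff, isOpen_iff_forall_mem_open]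
    intro x hx
    have hdisj : ({x} ×ˢ φ x : Set (X × Y)) ⊆ Cᶜ := by
      rintro ⟨a, b⟩ ⟨ha, hb⟩ hmem
      simp only [Set.mem_singleton_iff] at ha
      subst ha
      exact hx ⟨(a, b), hmem, rfl⟩
    obtain ⟨U, V, hU, hV, hxU, hφV, hUV⟩ :=
      generalized_tube_lemma isCompact_singleton (hcomp x) hC.isOpen_compl hdisj
    refine ⟨U ∩ {x' | φ x' ⊆ V}, ?_, hU.inter (husc V hV), hxU rfl, hφV⟩
    rintro x' ⟨hx'U, hx'V⟩
    rintro ⟨⟨a, b⟩, hab, rfl⟩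
    exact hUV ⟨hx'U, hx'V (hCG hab)⟩ hab
  -- G is closed
  have hGclosed : IsClosed G := by
    rw [← isOpen_compl_iff, isOpen_iff_forall_mem_open]
    rintro ⟨x, y⟩ hxy
    obtain ⟨U, V, hU, hV, hφU, hyV, hUV⟩ := (hcomp x).separation_of_notMem hxy
    refine ⟨{x' | φ x' ⊆ U} ×ˢ V, ?_, (husc U hU).prod hV, hφU, hyV⟩
    rintro ⟨a, b⟩ ⟨haU, hbV⟩ hmem
    exact hUV.ne_of_mem (haU hmem) hbV rfl
  -- Zorn's lemma: a minimal closed subset of G whose fibers are all nonempty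
  set S : Set (Set (X × Y)) := {E | E ⊆ G ∧ IsClosed E ∧ ∀ x, ∃ y, (x, y) ∈ E} with hSdef
  have hGS : G ∈ S := ⟨subset_rfl, hGclosed, fun x => (hne x).imp fun y hy => hy⟩
  obtain ⟨E, -, hEmin⟩ := zorn_superset_nonempty S (by
    rintro c hcS hchain ⟨E₀, hE₀⟩
    refine ⟨⋂₀ c, ⟨?_, ?_, ?_⟩, fun s hs => Set.sInter_subset_of_mem hs⟩
    · exact (Set.sInter_subset_of_mem hE₀).trans (hcS hE₀).1
    · exact isClosed_sInter fun s hs => (hcS hs).2.1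
    · intro x
      have hι : Nonempty c := ⟨⟨E₀, hE₀⟩⟩
      have K := (isCompact_singleton : IsCompact ({x} : Set X)).prod (hcomp x)
      have hKcl : IsClosed ({x} ×ˢ φ x : Set (X × Y)) :=
        (isClosed_singleton.prod ((hcomp x).isClosed))
      obtain ⟨⟨a, b⟩, hab⟩ :=
        IsCompact.nonempty_iInter_of_directed_nonempty_isCompact_isClosed
          (fun i : c => (i : Set (X × Y)) ∩ ({x} ×ˢ φ x))
          (fun i j => by
            rcases hchain.total i.2 j.2 with h | h
            · exact ⟨i, subset_rfl, Set.inter_subset_inter_left _ h⟩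
            · exact ⟨j, Set.inter_subset_inter_left _ h, subset_rfl⟩)
          (fun i => by
            obtain ⟨y, hy⟩ := (hcS i.2).2.2 x
            exact ⟨(x, y), hy, rfl, (hcS i.2).1 hy⟩)
          (fun i => K.inter_left (hcS i.2).2.1)
          (fun i => ((hcS i.2).2.1).inter hKcl)
      simp only [Set.mem_iInter, Set.mem_inter_iff, Set.mem_prod,
        Set.mem_singleton_iff] at hab
      have hax : a = x := (hab ⟨E₀, hE₀⟩).2.1
      subst hax
      exact ⟨b, fun s hs => (hab ⟨s, hs⟩).1⟩) G hGS
  obtain ⟨hEG, hEcl, hEfib⟩ := hEmin.prop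
  have hmin : ∀ D : Set (X × Y), IsClosed D → D ⊆ E → (∀ x, ∃ y, (x, y) ∈ D) → D = E :=
    fun D hD hDE hDf => hEmin.eq_of_subset ⟨hDE.trans hEG, hD, hDf⟩ hDE
  -- E is the graph of a function
  have huniq : ∀ x y₁ y₂, (x, y₁) ∈ E → (x, y₂) ∈ E → y₁ = y₂ := by
    intro x y₁ y₂ h1 h2
    by_contra hne'
    obtain ⟨V₁, V₂, hV₁, hV₂, hy₁, hy₂, hVd⟩ := t2_separation hne'
    set W : Set Y → Set X := fun V => (Prod.fst '' (E \ (Set.univ ×ˢ V)))ᶜ with hWdef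
    have hWopen : ∀ V : Set Y, IsOpen V → IsOpen (W V) := by
      intro V hV
      exact (keyClosed _ (fun p hp => hEG hp.1)
        (hEcl.inter (isOpen_univ.prod hV).isClosed_compl)).isOpen_compl
    have hWmem : ∀ (V : Set Y) (x' : X), x' ∈ W V ↔ ∀ y, (x', y) ∈ E → y ∈ V := by
      intro V x'
      constructor
      · intro hx' y hy
        by_contra hyV
        exact hx' ⟨(x', y), ⟨hy, fun h => hyV h.2⟩, rfl⟩
      · rintro h ⟨⟨a, b⟩, ⟨hab, hbV⟩, rfl⟩
        exact hbV ⟨trivial, h b hab⟩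
    -- x belongs to the closure of each W Vᵢ
    have hxcl : ∀ (V : Set Y) (y : Y), IsOpen V → y ∈ V → (x, y) ∈ E → x ∈ closure (W V) := by
      intro V y hV hyV hxyE
      by_contra hx
      have hN : IsOpen (closure (W V))ᶜ := isClosed_closure.isOpen_compl
      have hD : ((closure (W V))ᶜ ×ˢ V : Set (X × Y))ᶜ ∩ E = E := by
        apply hmin _ (((hN.prod hV).isClosed_compl).inter hEcl) Set.inter_subset_right
        intro x'
        by_cases hx' : x' ∈ (closure (W V))ᶜ
        · have hx'W : x' ∉ W V := fun h => hx' (subset_closure h)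
          rw [hWdef, Set.mem_compl_iff, not_not] at hx'W
          obtain ⟨⟨a, b⟩, ⟨hab, hbV⟩, rfl⟩ := hx'W
          refine ⟨b, ?_, hab⟩
          intro hmem
          exact hbV ⟨trivial, hmem.2⟩
        · obtain ⟨y', hy'⟩ := hEfib x'
          exact ⟨y', fun hmem => hx' hmem.1, hy'⟩
      have hmem : (x, y) ∈ (((closure (W V))ᶜ ×ˢ V : Set (X × Y))ᶜ ∩ E) := by
        rw [hD]; exact hxyE
      exact hmem.1 ⟨hx, hyV⟩
    have hx1 : x ∈ closure (W V₁) := hxcl V₁ y₁ hV₁ hy₁ h1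
    have hx2 : x ∈ closure (W V₂) := hxcl V₂ y₂ hV₂ hy₂ h2
    -- but the closures are disjoint
    have hWd : W V₁ ∩ W V₂ = ∅ := by
      rw [Set.eq_empty_iff_forall_notMem]
      rintro x' ⟨hw1, hw2⟩
      obtain ⟨y, hy⟩ := hEfib x'
      exact hVd.ne_of_mem ((hWmem V₁ x').1 hw1 y hy) ((hWmem V₂ x').1 hw2 y hy) rfl
    have hclW1 : IsOpen (closure (W V₁)) :=
      ExtremallyDisconnected.open_closure _ (hWopen V₁ hV₁)
    have hc1 : closure (W V₁) ⊆ (W V₂)ᶜ := by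
      apply closure_minimal _ (hWopen V₂ hV₂).isClosed_compl
      intro a ha hb
      exact Set.eq_empty_iff_forall_notMem.1 hWd a ⟨ha, hb⟩
    have hc2 : closure (W V₂) ⊆ (closure (W V₁))ᶜ := by
      apply closure_minimal _ hclW1.isClosed_compl
      intro a ha hb
      exact hc1 hb ha
    exact hc2 hx2 hx1
  choose f hf using hEfib
  refine ⟨f, ?_, fun x => hEG (hf x)⟩
  rw [continuous_def]
  intro V hV
  have hpre : f ⁻¹' V = (Prod.fst '' (E \ (Set.univ ×ˢ V)))ᶜ := by
    ext x
    constructor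
    · rintro hx ⟨⟨a, b⟩, ⟨hab, hbV⟩, rfl⟩
      exact hbV ⟨trivial, by rwa [huniq a b (f a) hab (hf a)]⟩
    · intro hx
      by_contra h
      exact hx ⟨(x, f x), ⟨hf x, fun hmem => h hmem.2⟩, rfl⟩
  rw [hpre]
  exact (keyClosed _ (fun p hp => hEG hp.1)
    (hEcl.inter (isOpen_univ.prod hV).isClosed_compl)).isOpen_compl
end

section
/- Let X be an extremally disconnected space, Y a regular Hausdorff space, and φ : X → Set Y a perfect usco mapping. Then φ has a perfect selection, i.e. a selection f : X → Y that is continuous, a closed map, and has compact fibers f⁻¹(y) for every y ∈ Y. -/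
/-!
Write `m x = {y | (x, y) ∈ m}` for `m ⊆ X × Y`. By Zorn's lemma and Cantor's intersection theorem,
the graph of `φ` contains a minimal closed set `m` with every `m x` nonempty, and `x ↦ m x` is again
usco. If some `m x` contained two points with disjoint open neighbourhoods `V₁`, `V₂`, minimality
would put `x` in the closures of the disjoint open sets `{x' | m x' ⊆ Vᵢ}`, which is impossible in
an extremally disconnected space. Hence `m` is the graph of a continuous selection `f`. As `φ` maps
closed sets to closed sets, `y ↦ φ⁻¹(y)` is usco; the closed graph of `y ↦ f⁻¹(y)` lies inside it,
so `f⁻¹` is upper semicontinuous, i.e. `f` is closed.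
-/

open Set Filter Topology

section

variable {X Y : Type*} [TopologicalSpace X] [TopologicalSpace Y]

theorem UpperHemicontinuous.isClosed_graph [T2Space Y] {φ : X → Set Y}
    (hφ : UpperHemicontinuous φ) (hcomp : ∀ x, IsCompact (φ x)) :
    IsClosed {p : X × Y | p.2 ∈ φ p.1} := by
  rw [← isOpen_compl_iff, isOpen_iff_mem_nhds]
  rintro ⟨x, y⟩ (hy : y ∉ φ x)
  obtain ⟨u, v, hu, hv, hyu, hφv, huv⟩ :=
    SeparatedNhds.of_isCompact_isCompact isCompact_singleton (hcomp x)
      (disjoint_singleton_left.2 hy)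
  filter_upwards [prod_mem_nhds (hφ.forall_isOpen x v hv hφv) (hu.mem_nhds (hyu rfl))]
    with ⟨x', y'⟩ ⟨hx', hy'⟩ hmem
  exact disjoint_left.1 huv hy' (hx' hmem)

theorem UpperHemicontinuous.of_le_of_isClosed_graph {φ ψ : X → Set Y}
    (hφ : UpperHemicontinuous φ) (hcomp : ∀ x, IsCompact (φ x)) (hψφ : ψ ≤ φ)
    (hψ : IsClosed {p : X × Y | p.2 ∈ ψ p.1}) : UpperHemicontinuous ψ := by
  refine .of_forall_isOpen fun x U hU hψU => ?_
  obtain ⟨u, v, hu, hv, hxu, hv', huv⟩ :=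
    generalized_tube_lemma isCompact_singleton ((hcomp x).diff hU) hψ.isOpen_compl
      (by rintro ⟨_, y⟩ ⟨rfl, -, hyU⟩ hy; exact hyU (hψU hy))
  filter_upwards [hu.mem_nhds (hxu rfl),
    hφ.forall_isOpen x _ (hU.union hv) (sdiff_subset_iff.1 hv')] with x' hx' hφx' y hy
  exact (hφx' (hψφ x' hy)).resolve_right fun hyv =>
    huv (show (x', y) ∈ u ×ˢ v from ⟨hx', hyv⟩) hy

theorem upperHemicontinuous_setOf_mem_iff {φ : X → Set Y} :
    UpperHemicontinuous (fun y => {x | y ∈ φ x}) ↔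
      ∀ S : Set X, IsClosed S → IsClosed (⋃ x ∈ S, φ x) := by
  rw [upperHemicontinuous_iff_isClosed_compl_preimage_Iic_compl]
  refine forall₂_congr fun S _ => ?_
  congr!
  ext y
  simp [subset_def, and_comm]

def IsClosedLeftTotal (E : Set (X × Y)) : Prop :=
  IsClosed E ∧ ∀ x, ∃ y, (x, y) ∈ E

theorem exists_minimal_isClosedLeftTotal_subset {G : Set (X × Y)} (hG : IsClosedLeftTotal G)
    (hcomp : ∀ x, IsCompact {y | (x, y) ∈ G}) : ∃ m ⊆ G, Minimal IsClosedLeftTotal m := by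
  let S := {E | IsClosedLeftTotal E ∧ E ⊆ G}
  have hchain : ∀ c ⊆ S, IsChain (· ⊆ ·) c → c.Nonempty → ∃ lb ∈ S, ∀ E ∈ c, lb ⊆ E := by
    intro c hcS hc ⟨E₀, hE₀⟩
    refine ⟨⋂₀ c, ⟨⟨isClosed_sInter fun E hE => (hcS hE).1.1, fun x => ?_⟩,
      (sInter_subset_of_mem hE₀).trans (hcS hE₀).2⟩, fun E => sInter_subset_of_mem⟩
    have : Nonempty c := ⟨⟨E₀, hE₀⟩⟩
    have hfib (E : c) : IsClosed {y | (x, y) ∈ (E : Set (X × Y))} :=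
      (hcS E.2).1.1.preimage (.prodMk_right x)
    obtain ⟨y, hy⟩ := IsCompact.nonempty_iInter_of_directed_nonempty_isCompact_isClosed
      (fun E : c => {y | (x, y) ∈ (E : Set (X × Y))})
      (fun E₁ E₂ => (hc.total E₁.2 E₂.2).elim (fun h => ⟨E₁, subset_rfl, fun _ hy => h hy⟩)
        (fun h => ⟨E₂, fun _ hy => h hy, subset_rfl⟩))
      (fun E => (hcS E.2).1.2 x)
      (fun E => (hcomp x).of_isClosed_subset (hfib E) fun _ hy => (hcS E.2).2 hy) hfib
    exact ⟨y, mem_sInter.2 fun E hE => mem_iInter.1 hy ⟨E, hE⟩⟩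
  obtain ⟨m, hmG, hm⟩ := zorn_superset_nonempty S hchain G ⟨hG, subset_rfl⟩
  exact ⟨m, hmG, hm.prop.1, fun E hE hEm => hm.2 ⟨hE, hEm.trans hmG⟩ hEm⟩

theorem mem_closure_setOf_subset_of_minimal {m : Set (X × Y)} (hm : Minimal IsClosedLeftTotal m)
    {x : X} {y : Y} (hxy : (x, y) ∈ m) {V : Set Y} (hV : IsOpen V) (hy : y ∈ V) :
    x ∈ closure {x' | {y' | (x', y') ∈ m} ⊆ V} := by
  refine mem_closure_iff.2 fun N hN hxN => ?_
  -- `m \ N ×ˢ V` is closed and strictly smaller than `m`, so it misses some vertical line.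
  obtain ⟨x', hx'⟩ : ∃ x', ∀ y', (x', y') ∈ m → (x', y') ∈ N ×ˢ V := by
    by_contra! h
    have : IsClosedLeftTotal (m \ N ×ˢ V) := ⟨hm.prop.1.sdiff (hN.prod hV), h⟩
    exact (hm.2 this sdiff_subset hxy).2 ⟨hxN, hy⟩
  obtain ⟨y', hy'⟩ := hm.prop.2 x'
  exact ⟨x', (hx' y' hy').1, fun y'' hy'' => (hx' y'' hy'').2⟩

theorem subsingleton_of_minimal_isClosedLeftTotal [ExtremallyDisconnected X] [T2Space Y]
    {m : Set (X × Y)} (hm : Minimal IsClosedLeftTotal m)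
    (husc : UpperHemicontinuous fun x => {y | (x, y) ∈ m}) (x : X) :
    {y | (x, y) ∈ m}.Subsingleton := by
  intro y₁ hy₁ y₂ hy₂
  by_contra hne
  obtain ⟨V₁, V₂, hV₁, hV₂, hy₁V, hy₂V, hV⟩ := t2_separation hne
  have hW : Disjoint {x' | {y | (x', y) ∈ m} ⊆ V₁} {x' | {y | (x', y) ∈ m} ⊆ V₂} := by
    refine disjoint_left.2 fun x' h₁ h₂ => ?_
    obtain ⟨y, hy⟩ := hm.prop.2 x'
    exact disjoint_left.1 hV (h₁ hy) (h₂ hy)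
  have husc' := upperHemicontinuous_iff_isOpen_preimage_Iic.1 husc
  exact disjoint_left.1
    (ExtremallyDisconnected.disjoint_closure_of_disjoint_isOpen hW (husc' V₁ hV₁) (husc' V₂ hV₂))
    (mem_closure_setOf_subset_of_minimal hm hy₁ hV₁ hy₁V)
    (mem_closure_setOf_subset_of_minimal hm hy₂ hV₂ hy₂V)

theorem exists_continuous_selection_of_upperHemicontinuous [ExtremallyDisconnected X] [T2Space Y]
    {φ : X → Set Y} (hφ : UpperHemicontinuous φ) (hcomp : ∀ x, IsCompact (φ x))
    (hne : ∀ x, (φ x).Nonempty) : ∃ f : X → Y, Continuous f ∧ ∀ x, f x ∈ φ x := by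
  obtain ⟨m, hmφ, hm⟩ :=
    exists_minimal_isClosedLeftTotal_subset ⟨hφ.isClosed_graph hcomp, hne⟩ hcomp
  have hψ : UpperHemicontinuous fun x => {y | (x, y) ∈ m} :=
    hφ.of_le_of_isClosed_graph hcomp (fun _ _ hy => hmφ hy) hm.prop.1
  choose f hf using hm.prop.2
  have hm_eq : (fun x => {y | (x, y) ∈ m}) = fun x => {f x} :=
    funext fun x => (subsingleton_of_minimal_isClosedLeftTotal hm hψ x).eq_singleton_of_mem (hf x)
  rw [hm_eq, upperHemicontinuous_singleton_iff] at hψ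
  exact ⟨f, hψ, fun x => hmφ (hf x)⟩

theorem IsClosedMap.of_continuous_selection [T2Space Y] {φ : X → Set Y}
    (himage_closed : ∀ S : Set X, IsClosed S → IsClosed (⋃ x ∈ S, φ x))
    (hfiber_compact : ∀ y : Y, IsCompact {x : X | y ∈ φ x}) {f : X → Y} (hf : Continuous f)
    (hfφ : ∀ x, f x ∈ φ x) : IsClosedMap f := by
  rw [isClosedMap_iff_upperHemicontinuous]
  exact (upperHemicontinuous_setOf_mem_iff.2 himage_closed).of_le_of_isClosed_graph
    hfiber_compact (fun y x (hx : f x = y) => hx ▸ hfφ x)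
    (isClosed_eq (hf.comp continuous_snd) continuous_fst)

end

theorem perfect_usco_perfect_selection_of_extremallyDisconnected_general
    {X Y : Type*} [TopologicalSpace X] [ExtremallyDisconnected X]
    [TopologicalSpace Y] [T2Space Y]
    (φ : X → Set Y)
    (hne : ∀ x, (φ x).Nonempty)
    (hcomp : ∀ x, IsCompact (φ x))
    (husc : ∀ U : Set Y, IsOpen U → IsOpen {x | φ x ⊆ U})
    (himage_closed : ∀ S : Set X, IsClosed S → IsClosed (⋃ x ∈ S, φ x))
    (hfiber_compact : ∀ y : Y, IsCompact {x : X | y ∈ φ x}) :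
    ∃ f : X → Y, Continuous f ∧ IsClosedMap f ∧ (∀ y : Y, IsCompact (f ⁻¹' {y})) ∧
      ∀ x, f x ∈ φ x := by
  obtain ⟨f, hf, hfφ⟩ := exists_continuous_selection_of_upperHemicontinuous
    (upperHemicontinuous_iff_isOpen_preimage_Iic.2 husc) hcomp hne
  refine ⟨f, hf, .of_continuous_selection himage_closed hfiber_compact hf hfφ, fun y => ?_, hfφ⟩
  exact (hfiber_compact y).of_isClosed_subset (isClosed_singleton.preimage hf)
    fun x (hx : f x = y) => hx ▸ hfφ x

/-- Hasumi's theorem, perfect version: every perfect usco mapping from an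
extremally disconnected space to a regular Hausdorff space has a perfect selection. -/
theorem perfect_usco_perfect_selection_of_extremallyDisconnected
    {X Y : Type*} [TopologicalSpace X] [T2Space X] [ExtremallyDisconnected X]
    [TopologicalSpace Y] [T2Space Y] [RegularSpace Y]
    (φ : X → Set Y)
    (hne : ∀ x, (φ x).Nonempty)
    (hcomp : ∀ x, IsCompact (φ x))
    (husc : ∀ U : Set Y, IsOpen U → IsOpen {x | φ x ⊆ U})
    (himage_closed : ∀ S : Set X, IsClosed S → IsClosed (⋃ x ∈ S, φ x))
    (hfiber_compact : ∀ y : Y, IsCompact {x : X | y ∈ φ x}) :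
    ∃ f : X → Y, Continuous f ∧ IsClosedMap f ∧ (∀ y : Y, IsCompact (f ⁻¹' {y})) ∧
      ∀ x, f x ∈ φ x :=
  perfect_usco_perfect_selection_of_extremallyDisconnected_general φ hne hcomp husc himage_closed
    hfiber_compact
end

section
/- Let X be an extremally disconnected regular Hausdorff space, Y a metrizable space, and φ : X → Set Y a compact-valued continuous set-valued mapping (i.e. both lower and upper semicontinuous with all values nonempty and compact). Then for each dense subset A ⊆ X, each continuous selection for the restriction φ↾A can be extended to a continuous selection for φ. -/
/-!
The extension is the continuous extension of `g` from the dense set `A`, so it suffices that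
`g` converges along the trace on `A` of the neighbourhood filter of every `x`, to a point of
`φ x`. Upper semicontinuity makes `g` tend to the neighbourhoods of the compact set `φ x`, so
`g` has cluster points there, and it converges as soon as it has only one. Two distinct
cluster points would give disjoint open sets `O₁, O₂` of `X` (pulled back from disjoint
neighbourhoods in `Y` through the dense set `A`) with `x` in both closures; extremal
disconnectedness makes those closures disjoint.
-/

open Filter Set Topology

namespace IsCompact

variable {X : Type*} [TopologicalSpace X] {s : Set X} {l : Filter X}

theorem exists_clusterPt_of_le_nhdsSet (hs : IsCompact s) [NeBot l] (hl : l ≤ 𝓝ˢ s) :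
    ∃ x ∈ s, ClusterPt x l := by
  by_contra! h
  have hdisj : Disjoint (𝓝ˢ s) l :=
    hs.disjoint_nhdsSet_left.2 fun x hx => by simpa [clusterPt_iff_not_disjoint] using h x hx
  exact NeBot.ne ‹_› (hdisj.eq_bot_of_ge hl)

theorem le_nhds_of_unique_clusterPt_of_le_nhdsSet (hs : IsCompact s) {y : X} (hl : l ≤ 𝓝ˢ s)
    (h : ∀ x ∈ s, ClusterPt x l → x = y) : l ≤ 𝓝 y := by
  refine le_iff_ultrafilter.2 fun f hf => ?_
  obtain ⟨x, hxs, hx⟩ := hs.exists_clusterPt_of_le_nhdsSet (hf.trans hl)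
  rw [Ultrafilter.clusterPt_iff] at hx
  exact h x hxs ((ClusterPt.of_le_nhds hx).mono hf) ▸ hx

end IsCompact

theorem tendsto_nhdsSet_of_upperSemicontinuous {X Y ι : Type*} [TopologicalSpace X]
    [TopologicalSpace Y] {φ : X → Set Y} (husc : ∀ U : Set Y, IsOpen U → IsOpen {x | φ x ⊆ U})
    {l : Filter ι} {u : ι → X} {x : X} (hu : Tendsto u l (𝓝 x)) {g : ι → Y}
    (hg : ∀ i, g i ∈ φ (u i)) : Tendsto g l (𝓝ˢ (φ x)) :=
  (hasBasis_nhdsSet _).tendsto_right_iff.2 fun U ⟨hU, hxU⟩ =>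
    Eventually.mono (hu ((husc U hU).mem_nhds hxU)) fun i hi => hi (hg i)

theorem MapClusterPt.mem_closure_image_preimage {X Y ι : Type*} [TopologicalSpace X]
    [TopologicalSpace Y] {u : ι → X} {g : ι → Y} {x : X} {y : Y}
    (h : MapClusterPt y (comap u (𝓝 x)) g) {V : Set Y} (hV : V ∈ 𝓝 y) :
    x ∈ closure (u '' (g ⁻¹' V)) :=
  mem_closure_iff_frequently.2 <| (frequently_comap.1 (mapClusterPt_iff_frequently.1 h V hV)).mono
    fun _ ⟨i, hi, hgi⟩ => ⟨i, hgi, hi⟩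

theorem Dense.disjoint_of_disjoint_preimage_val {X : Type*} [TopologicalSpace X] {A : Set X}
    (hA : Dense A) {U V : Set X} (hU : IsOpen U) (hV : IsOpen V)
    (h : Disjoint (((↑) : A → X) ⁻¹' U) ((↑) ⁻¹' V)) : Disjoint U V := by
  rw [disjoint_iff_inter_eq_empty, ← not_nonempty_iff_eq_empty]
  intro hUV
  obtain ⟨z, hzUV, hzA⟩ := hA.inter_open_nonempty _ (hU.inter hV) hUV
  exact h.ne_of_mem (a := ⟨z, hzA⟩) (b := ⟨z, hzA⟩) hzUV.1 hzUV.2 rfl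

theorem ExtremallyDisconnected.eq_of_mapClusterPt_comap_val {X Y : Type*} [TopologicalSpace X]
    [ExtremallyDisconnected X] [TopologicalSpace Y] [T2Space Y] {A : Set X} (hA : Dense A)
    {g : A → Y} (hg : Continuous g) {x : X} {y₁ y₂ : Y}
    (h₁ : MapClusterPt y₁ (comap (↑) (𝓝 x)) g) (h₂ : MapClusterPt y₂ (comap (↑) (𝓝 x)) g) :
    y₁ = y₂ := by
  by_contra hne
  obtain ⟨V₁, V₂, hV₁, hV₂, hy₁, hy₂, hV⟩ := t2_separation hne
  obtain ⟨O₁, hO₁, hO₁V⟩ := isOpen_induced_iff.1 (hV₁.preimage hg)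
  obtain ⟨O₂, hO₂, hO₂V⟩ := isOpen_induced_iff.1 (hV₂.preimage hg)
  have hO : Disjoint O₁ O₂ :=
    hA.disjoint_of_disjoint_preimage_val hO₁ hO₂ (hO₁V ▸ hO₂V ▸ hV.preimage g)
  have hx₁ : x ∈ closure O₁ := closure_mono (hO₁V ▸ image_preimage_subset _ _)
    (h₁.mem_closure_image_preimage (hV₁.mem_nhds hy₁))
  have hx₂ : x ∈ closure O₂ := closure_mono (hO₂V ▸ image_preimage_subset _ _)
    (h₂.mem_closure_image_preimage (hV₂.mem_nhds hy₂))
  exact (disjoint_closure_of_disjoint_isOpen hO hO₁ hO₂).ne_of_mem hx₁ hx₂ rfl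

theorem selection_extension_of_extremallyDisconnected_metrizable_general
    {X Y : Type*} [TopologicalSpace X]
    [ExtremallyDisconnected X]
    [TopologicalSpace Y] [TopologicalSpace.MetrizableSpace Y]
    (φ : X → Set Y)
    (hcomp : ∀ x, IsCompact (φ x))
    (husc : ∀ U : Set Y, IsOpen U → IsOpen {x | φ x ⊆ U})
    (A : Set X) (hA : Dense A)
    (g : A → Y) (hg : Continuous g) (hgsel : ∀ a : A, g a ∈ φ a) :
    ∃ f : X → Y, Continuous f ∧ (∀ x, f x ∈ φ x) ∧ ∀ a : A, f a = g a := by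
  have hlim : ∀ x, ∃ y ∈ φ x, Tendsto g (comap (↑) (𝓝 x)) (𝓝 y) := by
    intro x
    have := hA.comap_val_nhds_neBot x
    have hφ : Tendsto g (comap (↑) (𝓝 x)) (𝓝ˢ (φ x)) :=
      tendsto_nhdsSet_of_upperSemicontinuous husc tendsto_comap hgsel
    obtain ⟨y, hy, hgy⟩ := (hcomp x).exists_clusterPt_of_le_nhdsSet hφ
    exact ⟨y, hy, (hcomp x).le_nhds_of_unique_clusterPt_of_le_nhdsSet hφ fun z _ hz =>
      ExtremallyDisconnected.eq_of_mapClusterPt_comap_val hA hg hz hgy⟩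
  choose f hfφ hf using hlim
  refine ⟨hA.extend g, hA.continuous_extend fun x => ⟨f x, hf x⟩, fun x => ?_, hA.extend_eq hg⟩
  exact (hA.extend_eq_of_tendsto (hf x)).symm ▸ hfφ x

/-- Extension of densely defined continuous selections for compact-valued
continuous mappings into metrizable spaces, on extremally disconnected regular
Hausdorff domains. -/
theorem selection_extension_of_extremallyDisconnected_metrizable
    {X Y : Type*} [TopologicalSpace X] [T2Space X] [RegularSpace X]
    [ExtremallyDisconnected X]
    [TopologicalSpace Y] [T2Space Y] [TopologicalSpace.MetrizableSpace Y]
    (φ : X → Set Y)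
    (hne : ∀ x, (φ x).Nonempty)
    (hcomp : ∀ x, IsCompact (φ x))
    (husc : ∀ U : Set Y, IsOpen U → IsOpen {x | φ x ⊆ U})
    (hlsc : ∀ U : Set Y, IsOpen U → IsOpen {x | (φ x ∩ U).Nonempty})
    (A : Set X) (hA : Dense A)
    (g : A → Y) (hg : Continuous g) (hgsel : ∀ a : A, g a ∈ φ a) :
    ∃ f : X → Y, Continuous f ∧ (∀ x, f x ∈ φ x) ∧ ∀ a : A, f a = g a :=
  selection_extension_of_extremallyDisconnected_metrizable_general φ hcomp husc A hA g hg hgsel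
end

section
/- Let X be a space, Y a Hausdorff space, and ψ : X → Set Y a set-valued mapping with all values nonempty such that ψ⁻¹[U] ⊆ ψ♯[cl(U)] for every open U ⊆ Y, where ψ⁻¹[U] = {x : ψ(x) ∩ U ≠ ∅} and ψ♯[V] = {x : ψ(x) ⊆ V}. Then ψ is singleton-valued, i.e. for every x ∈ X the set ψ(x) is a singleton. -/
/-- If `ψ⁻¹[U] ⊆ ψ♯[closure U]` for every open `U`, then the (nonempty-valued)
mapping `ψ` into a Hausdorff space is singleton-valued. -/
theorem singleton_valued_of_preimage_subset_sharp_closure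
    {X Y : Type*} [TopologicalSpace X] [T2Space X] [TopologicalSpace Y] [T2Space Y]
    (ψ : X → Set Y)
    (hne : ∀ x, (ψ x).Nonempty)
    (h : ∀ U : Set Y, IsOpen U →
      {x : X | (ψ x ∩ U).Nonempty} ⊆ {x : X | ψ x ⊆ closure U}) :
    ∀ x : X, ∃ y : Y, ψ x = {y} := by
  intro x
  obtain ⟨y, hy⟩ := hne x
  refine ⟨y, Set.eq_singleton_iff_unique_mem.2 ⟨hy, fun z hz => ?_⟩⟩
  by_contra hzy
  obtain ⟨U, V, hU, hV, hzU, hyV, hUV⟩ := t2_separation hzy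
  have hcl : ψ x ⊆ closure U := h U hU ⟨z, hz, hzU⟩
  have : y ∈ closure U := hcl hy
  have hsub : closure U ⊆ Vᶜ :=
    closure_minimal (fun a ha hav => hUV.le_bot ⟨ha, hav⟩) hV.isClosed_compl
  exact hsub this hyV
end

section
/- Let X be an extremally disconnected space, Y a Hausdorff space, and ψ : X → Set Y a minimal usco mapping. Then for every open U ⊆ Y one has cl(ψ⁻¹[U]) = cl(ψ♯[U]) ⊆ ψ♯[cl(U)], where ψ⁻¹[U] = {x : ψ(x) ∩ U ≠ ∅} and ψ♯[V] = {x : ψ(x) ⊆ V}. -/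
/-- `ψ` is usco: nonempty compact values and upper semicontinuous. -/
def IsUsco {X Y : Type*} [TopologicalSpace X] [TopologicalSpace Y] (ψ : X → Set Y) : Prop :=
  (∀ x, (ψ x).Nonempty) ∧ (∀ x, IsCompact (ψ x)) ∧
    ∀ U : Set Y, IsOpen U → IsOpen {x | ψ x ⊆ U}

/-- `ψ` is a minimal usco mapping. -/
def IsMinimalUsco {X Y : Type*} [TopologicalSpace X] [TopologicalSpace Y]
    (ψ : X → Set Y) : Prop :=
  IsUsco ψ ∧ ∀ η : X → Set Y, IsUsco η → (∀ x, η x ⊆ ψ x) → η = ψ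

lemma key_minimal_usco {X Y : Type*} [TopologicalSpace X] [ExtremallyDisconnected X]
    [TopologicalSpace Y]
    (ψ : X → Set Y) (hψ : IsMinimalUsco ψ) (V : Set X) (hV : IsOpen V)
    (F : Set Y) (hF : IsClosed F) (h : ∀ x ∈ V, (ψ x ∩ F).Nonempty) :
    ∀ x ∈ closure V, ψ x ⊆ F := by
  classical
  obtain ⟨⟨hne, hcomp, husc⟩, hmin⟩ := hψ
  set C := closure V with hCdef
  have hCopen : IsOpen C := ExtremallyDisconnected.open_closure V hV
  have hCne : ∀ x ∈ C, (ψ x ∩ F).Nonempty := by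
    have hDc : IsClosed {x | (ψ x ∩ F).Nonempty} := by
      have : {x | (ψ x ∩ F).Nonempty} = {x | ψ x ⊆ Fᶜ}ᶜ := by
        ext x
        simp [Set.nonempty_iff_ne_empty, Set.subset_compl_iff_disjoint_right,
          Set.disjoint_iff_inter_eq_empty]
      rw [this]
      exact (husc Fᶜ hF.isOpen_compl).isClosed_compl
    exact fun x hx => hDc.closure_subset ((closure_mono (fun z hz => h z hz)) hx)
  set η : X → Set Y := fun x => if x ∈ C then ψ x ∩ F else ψ x with hηdef
  have hηsub : ∀ x, η x ⊆ ψ x := by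
    intro x
    by_cases hx : x ∈ C <;> simp [hηdef, hx, Set.inter_subset_left]
  have hηusco : IsUsco η := by
    refine ⟨?_, ?_, ?_⟩
    · intro x
      by_cases hx : x ∈ C
      · simpa [hηdef, hx] using hCne x hx
      · simpa [hηdef, hx] using hne x
    · intro x
      by_cases hx : x ∈ C
      · simpa [hηdef, hx] using (hcomp x).inter_right hF
      · simpa [hηdef, hx] using hcomp x
    · intro W hW
      have : {x | η x ⊆ W} = (C ∩ {x | ψ x ⊆ W ∪ Fᶜ}) ∪ (Cᶜ ∩ {x | ψ x ⊆ W}) := by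
        ext x
        by_cases hx : x ∈ C
        · simp only [hηdef, Set.mem_setOf_eq, hx, if_pos, Set.mem_union, Set.mem_inter_iff,
            Set.mem_compl_iff, not_true, false_and, or_false, true_and]
          constructor
          · intro hs y hy
            by_cases hyF : y ∈ F
            · exact Or.inl (hs ⟨hy, hyF⟩)
            · exact Or.inr hyF
          · rintro hs y ⟨hy, hyF⟩
            rcases hs hy with h1 | h1
            · exact h1
            · exact absurd hyF h1
        · simp [hηdef, hx]
      rw [this]
      exact ((hCopen.inter (husc _ (hW.union hF.isOpen_compl))).union
        ((isClosed_closure (s := V)).isOpen_compl.inter (husc W hW)))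
  have heq := hmin η hηusco hηsub
  intro x hx
  have : η x = ψ x := congrFun heq x
  rw [hηdef] at this
  simp only [hx, if_pos] at this
  rw [← this]
  exact Set.inter_subset_right

/-- On an extremally disconnected space, a minimal usco mapping satisfies
`closure ψ⁻¹[U] = closure ψ♯[U] ⊆ ψ♯[closure U]` for every open `U`. -/
theorem minimal_usco_closure_eq_and_subset_of_extremallyDisconnected
    {X Y : Type*} [TopologicalSpace X] [T2Space X] [ExtremallyDisconnected X]
    [TopologicalSpace Y] [T2Space Y]
    (ψ : X → Set Y) (hψ : IsMinimalUsco ψ) :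
    ∀ U : Set Y, IsOpen U →
      closure {x : X | (ψ x ∩ U).Nonempty} = closure {x : X | ψ x ⊆ U} ∧
      closure {x : X | ψ x ⊆ U} ⊆ {x : X | ψ x ⊆ closure U} := by
  intro U hU
  obtain ⟨⟨hne, hcomp, husc⟩, hmin⟩ := hψ
  constructor
  · apply subset_antisymm
    · -- closure ψ⁻¹[U] ⊆ closure ψ♯[U]
      rw [← closure_closure (s := {x : X | ψ x ⊆ U})]
      apply closure_mono
      intro x hx
      by_contra hxc
      have hVopen : IsOpen (closure {x : X | ψ x ⊆ U})ᶜ := isClosed_closure.isOpen_compl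
      have hkey := key_minimal_usco ψ ⟨⟨hne, hcomp, husc⟩, hmin⟩ _ hVopen Uᶜ hU.isClosed_compl
        (fun z hz => by
          rw [Set.inter_compl_nonempty_iff]
          exact fun hsub => hz (subset_closure hsub))
      have := hkey x (subset_closure hxc)
      obtain ⟨y, hy, hyU⟩ := hx
      exact this hy hyU
    · exact closure_mono (fun x hx => (hne x).mono (Set.subset_inter (le_refl _) hx))
  · -- closure ψ♯[U] ⊆ ψ♯[closure U]
    exact key_minimal_usco ψ ⟨⟨hne, hcomp, husc⟩, hmin⟩ _ (husc U hU) (closure U) isClosed_closure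
      (fun x hx => (hne x).mono (Set.subset_inter (le_refl _) ((Set.mem_setOf_eq ▸ hx).trans subset_closure)))
end

section
/- Let X be an extremally disconnected space, Y a Hausdorff space, and ψ : X → Set Y a minimal usco mapping. Then ψ is singleton-valued, i.e. for every x ∈ X the set ψ(x) is a singleton; consequently ψ is (identical to) a continuous single-valued map from X to Y. -/
/-- Key minimality lemma: if `ψ x` meets an open set `V`, then `x` lies in the
closure of the set of points whose value is contained in `V`. -/
lemma mem_closure_of_minimal_usco {X Y : Type*} [TopologicalSpace X] [TopologicalSpace Y]
    (ψ : X → Set Y) (hψ : IsMinimalUsco ψ) {V : Set Y} (hV : IsOpen V)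
    {x : X} (hx : (ψ x ∩ V).Nonempty) : x ∈ closure {z | ψ z ⊆ V} := by
  classical
  by_contra hxC
  set C : Set X := closure {z | ψ z ⊆ V} with hC
  set η : X → Set Y := fun z => if z ∈ C then ψ z else ψ z ∩ Vᶜ with hη
  have hsub : ∀ z, η z ⊆ ψ z := by
    intro z
    simp only [hη]
    split
    · exact subset_rfl
    · exact Set.inter_subset_left
  have hne : ∀ z, (η z).Nonempty := by
    intro z
    simp only [hη]
    split
    next h => exact hψ.1.1 z
    next h =>
      by_contra hemp
      rw [Set.not_nonempty_iff_eq_empty] at hemp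
      have hsubV : ψ z ⊆ V := by
        intro y hy
        by_contra hyV
        have : y ∈ ψ z ∩ Vᶜ := ⟨hy, hyV⟩
        rw [hemp] at this
        exact this
      exact h (subset_closure hsubV)
  have hcpt : ∀ z, IsCompact (η z) := by
    intro z
    simp only [hη]
    split
    · exact hψ.1.2.1 z
    · exact (hψ.1.2.1 z).inter_right hV.isClosed_compl
  have husc : ∀ U : Set Y, IsOpen U → IsOpen {z | η z ⊆ U} := by
    intro U hU
    have heq : {z | η z ⊆ U} = {z | ψ z ⊆ U} ∪ ({z | ψ z ⊆ U ∪ V} ∩ Cᶜ) := by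
      ext z
      simp only [Set.mem_setOf_eq, Set.mem_union, Set.mem_inter_iff, Set.mem_compl_iff, hη]
      constructor
      · intro h
        by_cases hz : z ∈ C
        · left; simpa [hz] using h
        · right
          refine ⟨?_, hz⟩
          simp only [hz, if_false] at h
          intro y hy
          by_cases hyV : y ∈ V
          · exact Or.inr hyV
          · exact Or.inl (h ⟨hy, hyV⟩)
      · intro h
        rcases h with h | ⟨h, hz⟩
        · split
          · exact h
          · exact Set.inter_subset_left.trans h
        · simp only [hz, if_false]
          rintro y ⟨hy, hyV⟩
          rcases h hy with h' | h'
          · exact h'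
          · exact absurd h' hyV
    rw [heq]
    exact (hψ.1.2.2 U hU).union ((hψ.1.2.2 _ (hU.union hV)).inter isClosed_closure.isOpen_compl)
  have hmin := hψ.2 η ⟨hne, hcpt, husc⟩ hsub
  have : ψ x = ψ x ∩ Vᶜ := by
    conv_lhs => rw [← hmin]
    simp only [hη, hxC, if_false]
  obtain ⟨y, hy, hyV⟩ := hx
  have : y ∈ ψ x ∩ Vᶜ := this ▸ hy
  exact this.2 hyV

/-- On an extremally disconnected space, every minimal usco mapping is
singleton-valued, hence identical to a continuous single-valued map. -/
theorem minimal_usco_singleton_valued_of_extremallyDisconnected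
    {X Y : Type*} [TopologicalSpace X] [T2Space X] [ExtremallyDisconnected X]
    [TopologicalSpace Y] [T2Space Y]
    (ψ : X → Set Y) (hψ : IsMinimalUsco ψ) :
    ∃ f : X → Y, Continuous f ∧ ∀ x : X, ψ x = {f x} := by
  have hsingle : ∀ x, (ψ x).Subsingleton := by
    intro x y₁ h₁ y₂ h₂
    by_contra hne
    obtain ⟨V₁, V₂, hV₁, hV₂, hy₁, hy₂, hdisj⟩ := t2_separation hne
    set D₁ : Set X := {z | ψ z ⊆ V₁} with hD₁
    set D₂ : Set X := {z | ψ z ⊆ V₂} with hD₂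
    have hD₁o : IsOpen D₁ := hψ.1.2.2 V₁ hV₁
    have hD₂o : IsOpen D₂ := hψ.1.2.2 V₂ hV₂
    have hDdisj : D₁ ∩ D₂ = ∅ := by
      ext z
      simp only [Set.mem_inter_iff, Set.mem_empty_iff_false, iff_false]
      rintro ⟨hz₁, hz₂⟩
      obtain ⟨y, hy⟩ := hψ.1.1 z
      exact hdisj.le_bot ⟨hz₁ hy, hz₂ hy⟩
    have hx₁ : x ∈ closure D₁ :=
      mem_closure_of_minimal_usco ψ hψ hV₁ ⟨y₁, h₁, hy₁⟩
    have hx₂ : x ∈ closure D₂ :=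
      mem_closure_of_minimal_usco ψ hψ hV₂ ⟨y₂, h₂, hy₂⟩
    have hcl₁ : IsOpen (closure D₁) := ExtremallyDisconnected.open_closure D₁ hD₁o
    have step1 : closure D₁ ∩ D₂ = ∅ := by
      apply Set.eq_empty_of_subset_empty
      intro z hz
      have := hD₂o.inter_closure (t := D₁) ⟨hz.2, hz.1⟩
      rw [Set.inter_comm, hDdisj, closure_empty] at this
      exact this
    have step2 : closure D₁ ∩ closure D₂ = ∅ := by
      apply Set.eq_empty_of_subset_empty
      intro z hz
      have := hcl₁.inter_closure (t := D₂) ⟨hz.1, hz.2⟩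
      rw [step1, closure_empty] at this
      exact this
    have : x ∈ (∅ : Set X) := step2 ▸ ⟨hx₁, hx₂⟩
    exact this
  choose f hf using hψ.1.1
  have heq : ∀ x, ψ x = {f x} := fun x => (hsingle x).eq_singleton_of_mem (hf x)
  refine ⟨f, ?_, heq⟩
  rw [continuous_def]
  intro U hU
  have : f ⁻¹' U = {x | ψ x ⊆ U} := by
    ext x
    simp [heq x, Set.singleton_subset_iff]
  rw [this]
  exact hψ.1.2.2 U hU
end

section
/- Every usco mapping contains a minimal usco mapping: if X is a space, Y a Hausdorff space, and φ : X → Set Y is usco, then there exists a minimal usco mapping ψ : X → Set Y with ψ(x) ⊆ φ(x) for every x ∈ X. -/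
/-- Every usco mapping contains a minimal usco mapping. -/
theorem exists_minimal_usco_le
    {X Y : Type*} [TopologicalSpace X] [T2Space X] [TopologicalSpace Y] [T2Space Y]
    (φ : X → Set Y) (hφ : IsUsco φ) :
    ∃ ψ : X → Set Y, IsMinimalUsco ψ ∧ ∀ x : X, ψ x ⊆ φ x := by
  classical
  set s : Set (X → Set Y) := {ψ | IsUsco ψ ∧ ∀ x, ψ x ⊆ φ x} with hs
  -- chain condition: every nonempty chain in `s` has a lower bound in `s`
  have key : ∀ c ⊆ s, IsChain (· ≤ ·) c → ∀ y ∈ c, ∃ lb ∈ s, ∀ z ∈ c, lb ≤ z := by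
    intro c hcs hc ψ₀ hψ₀
    haveI : Nonempty c := ⟨⟨ψ₀, hψ₀⟩⟩
    set lb : X → Set Y := fun x => ⋂ η : c, (η : X → Set Y) x with hlb
    have husco : ∀ η : c, IsUsco (η : X → Set Y) := fun η => (hcs η.2).1
    have hcl : ∀ (η : c) (x : X), IsClosed ((η : X → Set Y) x) :=
      fun η x => ((husco η).2.1 x).isClosed
    have hdir : ∀ x : X, Directed (· ⊇ ·) (fun η : c => (η : X → Set Y) x) := by
      intro x η₁ η₂
      rcases hc.total η₁.2 η₂.2 with h | h
      · exact ⟨η₁, subset_rfl, h x⟩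
      · exact ⟨η₂, h x, subset_rfl⟩
    have hlbsub : ∀ (η : c) (x : X), lb x ⊆ (η : X → Set Y) x := by
      intro η x
      exact Set.iInter_subset _ η
    have hne : ∀ x, (lb x).Nonempty := by
      intro x
      exact IsCompact.nonempty_iInter_of_directed_nonempty_isCompact_isClosed _
        (hdir x) (fun η => (husco η).1 x) (fun η => (husco η).2.1 x) (fun η => hcl η x)
    have hcpt : ∀ x, IsCompact (lb x) := by
      intro x
      exact ((husco ⟨ψ₀, hψ₀⟩).2.1 x).of_isClosed_subset
        (isClosed_iInter fun η => hcl η x) (hlbsub ⟨ψ₀, hψ₀⟩ x)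
    have hopen : ∀ U : Set Y, IsOpen U → IsOpen {x | lb x ⊆ U} := by
      intro U hU
      have : {x | lb x ⊆ U} = ⋃ η : c, {x | (η : X → Set Y) x ⊆ U} := by
        ext x
        simp only [Set.mem_setOf_eq, Set.mem_iUnion]
        constructor
        · intro hx
          -- use compactness of ψ₀ x and the directed family η x ∩ Uᶜ
          have hst : (ψ₀ x ∩ ⋂ η : c, ((η : X → Set Y) x ∩ Uᶜ)) = ∅ := by
            rw [← Set.iInter_inter]
            apply Set.eq_empty_of_subset_empty
            intro y hy
            exact (hy.2.2 (hx hy.2.1)).elim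
          have hdt : Directed (· ⊇ ·) (fun η : c => (η : X → Set Y) x ∩ Uᶜ) := by
            intro η₁ η₂
            rcases hdir x η₁ η₂ with ⟨η₃, h₁, h₂⟩
            exact ⟨η₃, Set.inter_subset_inter_left _ h₁, Set.inter_subset_inter_left _ h₂⟩
          obtain ⟨η, hη⟩ := ((husco ⟨ψ₀, hψ₀⟩).2.1 x).elim_directed_family_closed
            (fun η : c => (η : X → Set Y) x ∩ Uᶜ)
            (fun η => (hcl η x).inter hU.isClosed_compl) hst hdt
          -- pick η' below both ψ₀ and η
          rcases hdir x ⟨ψ₀, hψ₀⟩ η with ⟨η', h₁, h₂⟩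
          refine ⟨η', fun y hy => ?_⟩
          by_contra hyU
          exact Set.eq_empty_iff_forall_notMem.1 hη y ⟨h₁ hy, h₂ hy, hyU⟩
        · rintro ⟨η, hη⟩
          exact (hlbsub η x).trans hη
      rw [this]
      exact isOpen_iUnion fun η => (husco η).2.2 U hU
    refine ⟨lb, ⟨⟨hne, hcpt, hopen⟩, fun x => (hlbsub ⟨ψ₀, hψ₀⟩ x).trans ((hcs hψ₀).2 x)⟩,
      fun z hz x => hlbsub ⟨z, hz⟩ x⟩
  -- apply Zorn's lemma in the dual order
  obtain ⟨ψ, -, hψmem, hψmax⟩ := zorn_le_nonempty₀ (α := (X → Set Y)ᵒᵈ) s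
    (fun c hcs hc y hy => by
      obtain ⟨lb, hlbs, hlb⟩ := key c hcs hc.symm y hy
      exact ⟨lb, hlbs, fun z hz => hlb z hz⟩)
    (OrderDual.toDual φ) ⟨hφ, fun x => subset_rfl⟩
  refine ⟨ψ, ⟨hψmem.1, ?_⟩, hψmem.2⟩
  intro η hη hηψ
  have hηs : η ∈ s := ⟨hη, fun x => (hηψ x).trans (hψmem.2 x)⟩
  funext x
  exact le_antisymm (hηψ x) (hψmax hηs (fun x => hηψ x) x)
end

section
/- Let X be an extremally disconnected space and Y an arbitrary Hausdorff space (not assumed regular). Then every usco mapping φ : X → Set Y has a continuous selection. -/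
open Set Topology

/-- Shapiro's generalisation of Hasumi's theorem: every usco mapping from an
extremally disconnected space to an arbitrary Hausdorff space has a
continuous selection. -/
theorem usco_selection_of_extremallyDisconnected_hausdorff
    {X Y : Type*} [TopologicalSpace X] [T2Space X] [ExtremallyDisconnected X]
    [TopologicalSpace Y] [T2Space Y]
    (φ : X → Set Y)
    (hne : ∀ x, (φ x).Nonempty)
    (hcomp : ∀ x, IsCompact (φ x))
    (husc : ∀ U : Set Y, IsOpen U → IsOpen {x | φ x ⊆ U}) :
    ∃ f : X → Y, Continuous f ∧ ∀ x, f x ∈ φ x := by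
  classical
  -- sections of a graph
  let sec : Set (X × Y) → X → Set Y := fun T x => {y | (x, y) ∈ T}
  -- predicate: usco submap of φ
  let P : (X → Set Y) → Prop := fun ψ =>
    (∀ x, ψ x ⊆ φ x) ∧ (∀ x, (ψ x).Nonempty) ∧ (∀ x, IsCompact (ψ x)) ∧
      ∀ U : Set Y, IsOpen U → IsOpen {x | ψ x ⊆ U}
  let S : Set (Set (X × Y)) := {T | P (sec T)}
  have hφS : {p : X × Y | p.2 ∈ φ p.1} ∈ S :=
    ⟨fun x => le_refl _, hne, hcomp, husc⟩
  -- Zorn's lemma: chains have lower bounds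
  have hchain : ∀ c ⊆ S, IsChain (· ⊆ ·) c → ∃ lb ∈ S, ∀ s ∈ c, lb ⊆ s := by
    intro c hcS hch
    rcases c.eq_empty_or_nonempty with rfl | hcne
    · exact ⟨{p : X × Y | p.2 ∈ φ p.1}, hφS, by simp⟩
    · have hι : Nonempty c := hcne.to_subtype
      have hsec : ∀ x, sec (⋂₀ c) x = ⋂ T : c, sec (T : Set (X × Y)) x := by
        intro x; ext y
        simp [sec, mem_sInter]
      have hmono : ∀ (T T' : Set (X × Y)), T ⊆ T' → ∀ x, sec T x ⊆ sec T' x :=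
        fun T T' h x y hy => h hy
      have hdir : ∀ x, Directed (· ⊇ ·) (fun T : c => sec T.1 x) := by
        intro x T T'
        rcases (eq_or_ne T T') with rfl | hTT'
        · exact ⟨T, le_refl _, le_refl _⟩
        rcases hch T.2 T'.2 (Subtype.coe_injective.ne hTT') with h | h
        · exact ⟨T, le_refl _, hmono _ _ h x⟩
        · exact ⟨T', hmono _ _ h x, le_refl _⟩
      have hPT : ∀ T : c, P (sec T.1) := fun T => hcS T.2
      have hTne : ∀ (x : X) (T : c), (sec T.1 x).Nonempty := fun x T => (hPT T).2.1 x
      have hTc : ∀ (x : X) (T : c), IsCompact (sec T.1 x) := fun x T => (hPT T).2.2.1 x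
      have hTcl : ∀ (x : X) (T : c), IsClosed (sec T.1 x) := fun x T => (hTc x T).isClosed
      refine ⟨⋂₀ c, ⟨?_, ?_, ?_, ?_⟩, fun s hs => sInter_subset_of_mem hs⟩
      · intro x y hy
        exact (hPT hι.some).1 x ((hsec x ▸ hy :) |> fun h => mem_iInter.mp h hι.some)
      · intro x
        rw [hsec x]
        exact IsCompact.nonempty_iInter_of_directed_nonempty_isCompact_isClosed _
          (hdir x) (hTne x) (hTc x) (hTcl x)
      · intro x
        rw [hsec x]
        exact IsCompact.of_isClosed_subset (hTc x hι.some)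
          (isClosed_iInter (hTcl x)) (iInter_subset _ _)
      · intro U hU
        rw [isOpen_iff_forall_mem_open]
        intro x hx
        -- find T with sec T x ⊆ U
        have hex : ∃ T : c, sec T.1 x ⊆ U := by
          by_contra hno
          push_neg at hno
          have hno' : ∀ T : c, (sec T.1 x ∩ Uᶜ).Nonempty := by
            intro T
            rcases not_subset.mp (hno T) with ⟨y, hy1, hy2⟩
            exact ⟨y, hy1, hy2⟩
          have hdir' : Directed (· ⊇ ·) (fun T : c => sec T.1 x ∩ Uᶜ) := by
            intro T T'
            obtain ⟨T'', h1, h2⟩ := hdir x T T'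
            exact ⟨T'', inter_subset_inter_left _ h1, inter_subset_inter_left _ h2⟩
          have hnonempty :=
            IsCompact.nonempty_iInter_of_directed_nonempty_isCompact_isClosed
              (fun T : c => sec T.1 x ∩ Uᶜ) hdir' hno'
              (fun T => (hTc x T).inter_right hU.isClosed_compl)
              (fun T => (hTcl x T).inter hU.isClosed_compl)
          obtain ⟨y, hy⟩ := hnonempty
          rw [mem_iInter] at hy
          have hy1 : y ∈ sec (⋂₀ c) x := by
            rw [hsec x, mem_iInter]; exact fun T => (hy T).1
          exact (hy hι.some).2 (hx hy1)
        obtain ⟨T, hT⟩ := hex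
        refine ⟨{z | sec T.1 z ⊆ U}, ?_, (hPT T).2.2.2 U hU, hT⟩
        intro z hz y hy
        have : y ∈ sec T.1 z := hmono _ _ (sInter_subset_of_mem T.2) z hy
        exact hz this
  obtain ⟨M, hMS, hMmin⟩ := zorn_superset S hchain
  set ψ : X → Set Y := sec M with hψdef
  obtain ⟨hψφ, hψne, hψcomp, hψusc⟩ := hMS
  -- minimality in function form
  have hmin : ∀ θ : X → Set Y, P θ → (∀ x, θ x ⊆ ψ x) → ∀ x, ψ x ⊆ θ x := by
    intro θ hθ hle x y hy
    have h1 : {p : X × Y | p.2 ∈ θ p.1} ∈ S := hθ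
    have h2 : {p : X × Y | p.2 ∈ θ p.1} ⊆ M := fun p hp => hle p.1 hp
    exact hMmin h1 h2 hy
  -- Lemma A: if ψ meets closed F on open G, then ψ ⊆ F on G
  have lemA : ∀ (G : Set X) (F : Set Y), IsOpen G → IsClosed F →
      (∀ x ∈ G, (ψ x ∩ F).Nonempty) → ∀ x ∈ G, ψ x ⊆ F := by
    intro G F hG hF hmeet
    set θ : X → Set Y := fun x => if x ∈ closure G then ψ x ∩ F else ψ x with hθdef
    have hθsub : ∀ x, θ x ⊆ ψ x := by
      intro x
      by_cases h : x ∈ closure G <;> simp [hθdef, h]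
    have hθne : ∀ x, (θ x).Nonempty := by
      intro x
      by_cases h : x ∈ closure G
      · simp only [hθdef, if_pos h]
        by_contra hemp
        rw [not_nonempty_iff_eq_empty] at hemp
        have hsub : ψ x ⊆ Fᶜ := by
          intro y hy hyF
          have hmem : y ∈ ψ x ∩ F := ⟨hy, hyF⟩
          rw [hemp] at hmem
          exact hmem
        obtain ⟨z, hzW, hzG⟩ :=
          mem_closure_iff.mp h _ (hψusc _ hF.isOpen_compl) hsub
        obtain ⟨y, hy1, hy2⟩ := hmeet z hzG
        exact hzW hy1 hy2
      · simpa [hθdef, if_neg h] using hψne x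
    have hθcomp : ∀ x, IsCompact (θ x) := by
      intro x
      by_cases h : x ∈ closure G
      · simpa [hθdef, if_pos h] using (hψcomp x).inter_right hF
      · simpa [hθdef, if_neg h] using hψcomp x
    have hclopen : IsOpen (closure G) := ExtremallyDisconnected.open_closure G hG
    have hθusc : ∀ U : Set Y, IsOpen U → IsOpen {x | θ x ⊆ U} := by
      intro U hU
      have heq : {x | θ x ⊆ U} =
          ({x | ψ x ⊆ U ∪ Fᶜ} ∩ closure G) ∪
            ({x | ψ x ⊆ U} ∩ (closure G)ᶜ) := by
        ext x
        by_cases h : x ∈ closure G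
        · simp only [hθdef, mem_setOf_eq, if_pos h, mem_union, mem_inter_iff, h,
            and_true, mem_compl_iff, not_true, and_false, or_false]
          constructor
          · intro hx y hy
            by_cases hyF : y ∈ F
            · exact Or.inl (hx ⟨hy, hyF⟩)
            · exact Or.inr hyF
          · intro hx y hy
            rcases hx hy.1 with h' | h'
            · exact h'
            · exact absurd hy.2 h'
        · simp [hθdef, if_neg h, h]
      rw [heq]
      exact ((hψusc _ (hU.union hF.isOpen_compl)).inter hclopen).union
        ((hψusc U hU).inter isClosed_closure.isOpen_compl)
    have hθP : P θ := ⟨fun x => (hθsub x).trans (hψφ x), hθne, hθcomp, hθusc⟩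
    intro x hxG y hy
    have hx : ψ x ⊆ θ x := hmin θ hθP hθsub x
    have hθx : θ x = ψ x ∩ F := if_pos (subset_closure hxG)
    exact (hθx ▸ hx hy).2
  -- density: {ψ ∩ V ≠ ∅} ⊆ closure {ψ ⊆ V}
  have hdense : ∀ V : Set Y, IsOpen V → ∀ x, (ψ x ∩ V).Nonempty →
      x ∈ closure {z | ψ z ⊆ V} := by
    intro V hV x hx
    by_contra hxC
    have hG : IsOpen (closure {z | ψ z ⊆ V})ᶜ := isClosed_closure.isOpen_compl
    have hall : ∀ z ∈ (closure {z | ψ z ⊆ V})ᶜ, (ψ z ∩ Vᶜ).Nonempty := by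
      intro z hz
      by_contra hemp
      rw [not_nonempty_iff_eq_empty] at hemp
      have hsub : ψ z ⊆ V := by
        intro y hy
        by_contra hyV
        have hmem : y ∈ ψ z ∩ Vᶜ := ⟨hy, hyV⟩
        rw [hemp] at hmem
        exact hmem
      exact hz (subset_closure hsub)
    have hVc := lemA _ _ hG hV.isClosed_compl hall x hxC
    obtain ⟨y, hy1, hy2⟩ := hx
    exact hVc hy1 hy2
  -- single-valuedness
  have hsingle : ∀ x y₁ y₂, y₁ ∈ ψ x → y₂ ∈ ψ x → y₁ = y₂ := by
    intro x y₁ y₂ h1 h2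
    by_contra hne12
    obtain ⟨V₁, V₂, hV₁, hV₂, hy1, hy2, hdisj⟩ := t2_separation hne12
    have hx1 : x ∈ closure {z | ψ z ⊆ V₁} := hdense V₁ hV₁ x ⟨y₁, h1, hy1⟩
    have hx2 : x ∈ closure {z | ψ z ⊆ V₂} := hdense V₂ hV₂ x ⟨y₂, h2, hy2⟩
    have hU12 : {z | ψ z ⊆ V₁} ⊆ {z | ψ z ⊆ V₂}ᶜ := by
      intro z hz hz2
      obtain ⟨y, hy⟩ := hψne z
      exact hdisj.le_bot ⟨hz hy, hz2 hy⟩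
    have hcl1 : closure {z | ψ z ⊆ V₁} ⊆ {z | ψ z ⊆ V₂}ᶜ :=
      closure_minimal hU12 (hψusc V₂ hV₂).isClosed_compl
    have hopen1 : IsOpen (closure {z | ψ z ⊆ V₁}) :=
      ExtremallyDisconnected.open_closure _ (hψusc V₁ hV₁)
    have hU2sub : {z | ψ z ⊆ V₂} ⊆ (closure {z | ψ z ⊆ V₁})ᶜ :=
      fun z hz hzc => hcl1 hzc hz
    have hcl2 : closure {z | ψ z ⊆ V₂} ⊆ (closure {z | ψ z ⊆ V₁})ᶜ :=
      closure_minimal hU2sub hopen1.isClosed_compl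
    exact hcl2 hx2 hx1
  -- build the selection
  choose g hg using hψne
  refine ⟨g, ?_, fun x => hψφ x (hg x)⟩
  rw [continuous_def]
  intro V hV
  have hpre : g ⁻¹' V = {x | ψ x ⊆ V} := by
    ext x
    constructor
    · intro hx y hy
      rwa [hsingle x y (g x) hy (hg x)]
    · intro hx
      exact hx (hg x)
  rw [hpre]
  exact hψusc V hV
end

section
/- Let X be an extremally disconnected space, Y an arbitrary Hausdorff space, and φ : X → Set Y a perfect usco mapping. Then φ has a perfect selection, i.e. a selection f : X → Y that is continuous, a closed map, and has compact fibers f⁻¹(y) for every y ∈ Y. -/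
open Set

section Aux

variable {X Y : Type*} [TopologicalSpace X] [TopologicalSpace Y]

/-- The projection to `X` of a closed subset of the graph of a usco map is closed. -/
theorem usco_proj_isClosed_aux (φ : X → Set Y)
    (hcomp : ∀ x, IsCompact (φ x))
    (husc : ∀ U : Set Y, IsOpen U → IsOpen {x | φ x ⊆ U})
    {C : Set (X × Y)} (hC : IsClosed C) (hCg : ∀ p ∈ C, p.2 ∈ φ p.1) :
    IsClosed (Prod.fst '' C) := by
  rw [← isOpen_compl_iff, isOpen_iff_forall_mem_open]
  intro x hx
  have h1 : ∀ y ∈ φ x, ∃ U V : Set _, IsOpen U ∧ IsOpen V ∧ x ∈ U ∧ y ∈ V ∧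
      ∀ p : X × Y, p ∈ U ×ˢ V → p ∉ C := by
    intro y hy
    have hpC : (x, y) ∉ C := fun h => hx ⟨(x, y), h, rfl⟩
    have hmem : Cᶜ ∈ nhds (x, y) := hC.isOpen_compl.mem_nhds hpC
    rw [mem_nhds_prod_iff'] at hmem
    obtain ⟨U, V, hU, hxU, hV, hyV, hUV⟩ := hmem
    exact ⟨U, V, hU, hV, hxU, hyV, fun p hp => hUV hp⟩
  choose U V hUo hVo hxU hyV hUV using h1
  obtain ⟨t, ht⟩ := (hcomp x).elim_nhds_subcover' (fun y hy => V y hy)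
    (fun y hy => (hVo y hy).mem_nhds (hyV y hy))
  classical
  set W : Set Y := ⋃ y ∈ t, V y y.2 with hW
  have hWo : IsOpen W := isOpen_biUnion fun y _ => hVo y y.2
  refine ⟨{x' | φ x' ⊆ W} ∩ ⋂ y ∈ t, U y y.2, ?_, ?_, ?_, ?_⟩
  · rintro x' ⟨h1, h2⟩ ⟨⟨a, b⟩, hpC, rfl⟩
    have hbφ : b ∈ φ a := hCg _ hpC
    have hbW : b ∈ W := h1 hbφ
    simp only [hW, mem_iUnion] at hbW
    obtain ⟨y₀, hy₀t, hbV⟩ := hbW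
    have haU : a ∈ U y₀ y₀.2 := by
      have := mem_iInter₂.1 h2 y₀ hy₀t
      exact this
    exact hUV y₀ y₀.2 (a, b) ⟨haU, hbV⟩ hpC
  · exact (husc W hWo).inter (isOpen_biInter_finset fun y _ => hUo y y.2)
  · exact ht
  · exact mem_iInter₂.2 fun y _ => hxU y y.2
end Aux

/-- Every perfect usco mapping from an extremally disconnected space to an
arbitrary Hausdorff space has a perfect selection. -/
theorem perfect_usco_perfect_selection_of_extremallyDisconnected_hausdorff
    {X Y : Type*} [TopologicalSpace X] [T2Space X] [ExtremallyDisconnected X]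
    [TopologicalSpace Y] [T2Space Y]
    (φ : X → Set Y)
    (hne : ∀ x, (φ x).Nonempty)
    (hcomp : ∀ x, IsCompact (φ x))
    (husc : ∀ U : Set Y, IsOpen U → IsOpen {x | φ x ⊆ U})
    (himage_closed : ∀ S : Set X, IsClosed S → IsClosed (⋃ x ∈ S, φ x))
    (hfiber_compact : ∀ y : Y, IsCompact {x : X | y ∈ φ x}) :
    ∃ f : X → Y, Continuous f ∧ IsClosedMap f ∧ (∀ y : Y, IsCompact (f ⁻¹' {y})) ∧
      ∀ x, f x ∈ φ x := by
  classical
  set G : Set (X × Y) := {p | p.2 ∈ φ p.1} with hGdef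
  have hGclosed : IsClosed G := by
    rw [← isOpen_compl_iff, isOpen_iff_forall_mem_open]
    rintro ⟨x, y⟩ hxy
    have hyφ : y ∉ φ x := hxy
    obtain ⟨V, W, hVo, hWo, hyV, hφW, hVW⟩ :=
      SeparatedNhds.of_isCompact_isCompact isCompact_singleton (hcomp x)
        (disjoint_singleton_left.2 hyφ)
    refine ⟨{x' | φ x' ⊆ W} ×ˢ V, ?_, (husc W hWo).prod hVo, hφW, hyV rfl⟩
    rintro ⟨a, b⟩ ⟨haW, hbV⟩ hbφ
    exact hVW.le_bot ⟨hbV, haW hbφ⟩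
  set 𝒮 : Set (Set (X × Y)) := {F | F ⊆ G ∧ IsClosed F ∧ ∀ x, ∃ y, (x, y) ∈ F}
    with h𝒮def
  have hG𝒮 : G ∈ 𝒮 := ⟨subset_rfl, hGclosed, fun x => (hne x).imp fun y hy => hy⟩
  have hzorn : ∀ c ⊆ 𝒮, IsChain (· ⊆ ·) c → c.Nonempty →
      ∃ lb ∈ 𝒮, ∀ s ∈ c, lb ⊆ s := by
    intro c hc𝒮 hchain hcne
    refine ⟨⋂₀ c, ⟨?_, ?_, ?_⟩, fun s hs => sInter_subset_of_mem hs⟩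
    · obtain ⟨F₀, hF₀⟩ := hcne
      exact (sInter_subset_of_mem hF₀).trans (hc𝒮 hF₀).1
    · exact isClosed_sInter fun F hF => (hc𝒮 hF).2.1
    · intro x
      haveI : Nonempty c := hcne.to_subtype
      have hsec : (⋂ F : c, {y | (x, y) ∈ (F : Set (X × Y))}).Nonempty := by
        apply IsCompact.nonempty_iInter_of_directed_nonempty_isCompact_isClosed
        · rintro ⟨F₁, h₁⟩ ⟨F₂, h₂⟩
          rcases hchain.total h₁ h₂ with h | h
          · exact ⟨⟨F₁, h₁⟩, fun y hy => hy, fun y hy => h hy⟩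
          · exact ⟨⟨F₂, h₂⟩, fun y hy => h hy, fun y hy => hy⟩
        · rintro ⟨F, hF⟩
          exact (hc𝒮 hF).2.2 x
        · rintro ⟨F, hF⟩
          refine IsCompact.of_isClosed_subset (hcomp x)
            (IsClosed.preimage (Continuous.prodMk_right x) (hc𝒮 hF).2.1) ?_
          intro y hy
          exact (hc𝒮 hF).1 hy
        · rintro ⟨F, hF⟩
          exact IsClosed.preimage (Continuous.prodMk_right x) (hc𝒮 hF).2.1
      obtain ⟨y, hy⟩ := hsec
      exact ⟨y, fun F hF => mem_iInter.1 hy ⟨F, hF⟩⟩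
  obtain ⟨F, -, hFmin⟩ := zorn_superset_nonempty 𝒮 hzorn G hG𝒮
  obtain ⟨hFsub, hFcl, hFsurj⟩ := hFmin.prop
  -- upper semicontinuity of the sections of F
  have huscF : ∀ W : Set Y, IsOpen W → IsOpen {x | ∀ y, (x, y) ∈ F → y ∈ W} := by
    intro W hWo
    have hCcl : IsClosed (F ∩ Prod.snd ⁻¹' Wᶜ) :=
      hFcl.inter (hWo.isClosed_compl.preimage continuous_snd)
    have hproj : IsClosed (Prod.fst '' (F ∩ Prod.snd ⁻¹' Wᶜ)) :=
      usco_proj_isClosed_aux φ hcomp husc hCcl (fun p hp => hFsub hp.1)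
    have heq : {x | ∀ y, (x, y) ∈ F → y ∈ W} =
        (Prod.fst '' (F ∩ Prod.snd ⁻¹' Wᶜ))ᶜ := by
      ext x
      simp only [mem_setOf_eq, mem_compl_iff, mem_image, Prod.exists, not_exists]
      constructor
      · intro h x1 x2
        rintro ⟨⟨hab, hbW⟩, rfl⟩
        exact hbW (h x2 hab)
      · intro h y hy
        by_contra hyW
        exact h x y ⟨⟨hy, hyW⟩, rfl⟩
    rw [heq]
    exact hproj.isOpen_compl
  -- single-valuedness via extremal disconnectedness
  have hsub : ∀ x : X, Set.Subsingleton {y | (x, y) ∈ F} := by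
    intro x₀ y₁ hy₁ y₂ hy₂
    by_contra hne12
    obtain ⟨V₁, V₂, hV₁o, hV₂o, hy₁V, hy₂V, hV12⟩ := t2_separation hne12
    set G₁ : Set X := {x | ∀ y, (x, y) ∈ F → y ∈ V₁} with hG₁def
    set G₂ : Set X := {x | ∀ y, (x, y) ∈ F → y ∈ V₂} with hG₂def
    have hG₁o : IsOpen G₁ := huscF V₁ hV₁o
    have hG₂o : IsOpen G₂ := huscF V₂ hV₂o
    have hdisj : ∀ x, x ∈ G₁ → x ∈ G₂ → False := by
      intro x h1 h2
      obtain ⟨y, hy⟩ := hFsurj x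
      exact hV12.le_bot ⟨h1 y hy, h2 y hy⟩
    have key : ∀ (V : Set Y) (y' : Y), IsOpen V → y' ∈ V → (x₀, y') ∈ F →
        x₀ ∈ closure {x | ∀ y, (x, y) ∈ F → y ∈ V} := by
      intro V y' hVo hy'V hy'F
      rw [mem_closure_iff]
      intro U hUo hx₀U
      by_contra hUe
      rw [not_nonempty_iff_eq_empty] at hUe
      have hF'𝒮 : F \ (U ×ˢ V) ∈ 𝒮 := by
        refine ⟨diff_subset.trans hFsub, hFcl.sdiff (hUo.prod hVo), ?_⟩
        intro x
        obtain ⟨y, hy⟩ := hFsurj x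
        by_cases hxU : x ∈ U
        · have hxGv : ¬ ∀ y, (x, y) ∈ F → y ∈ V := by
            intro hg
            exact absurd hUe (Set.nonempty_iff_ne_empty.1 ⟨x, hxU, hg⟩)
          push_neg at hxGv
          obtain ⟨y', hy'F', hy'nV⟩ := hxGv
          exact ⟨y', hy'F', fun hm => hy'nV hm.2⟩
        · exact ⟨y, hy, fun hm => hxU hm.1⟩
      have : F ⊆ F \ (U ×ˢ V) := hFmin.2 hF'𝒮 diff_subset
      exact (this hy'F).2 ⟨hx₀U, hy'V⟩
    have hx₀1 : x₀ ∈ closure G₁ := key V₁ y₁ hV₁o hy₁V hy₁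
    have hx₀2 : x₀ ∈ closure G₂ := key V₂ y₂ hV₂o hy₂V hy₂
    have hclopen : IsOpen (closure G₁) := ExtremallyDisconnected.open_closure G₁ hG₁o
    have hstep1 : closure G₁ ∩ G₂ = ∅ := by
      rw [eq_empty_iff_forall_notMem]
      rintro x ⟨hx1, hx2⟩
      obtain ⟨x', hx'⟩ := mem_closure_iff.1 hx1 G₂ hG₂o hx2
      exact hdisj x' hx'.2 hx'.1
    obtain ⟨x', hx'⟩ := mem_closure_iff.1 hx₀2 (closure G₁) hclopen hx₀1
    exact absurd hstep1 (Set.nonempty_iff_ne_empty.1 ⟨x', hx'⟩)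
  choose f hf using hFsurj
  have hmemF : ∀ x y, (x, y) ∈ F → y = f x := fun x y h => hsub x h (hf x)
  have hfφ : ∀ x, f x ∈ φ x := fun x => hFsub (hf x)
  have hcont : Continuous f := by
    rw [continuous_def]
    intro W hWo
    have heq : f ⁻¹' W = {x | ∀ y, (x, y) ∈ F → y ∈ W} := by
      ext x
      constructor
      · intro hx y hy
        rw [hmemF x y hy]; exact hx
      · intro hx
        exact hx (f x) (hf x)
    rw [heq]
    exact huscF W hWo
  refine ⟨f, hcont, ?_, ?_, hfφ⟩
  · -- closed map
    intro Sc hSc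
    rw [← isOpen_compl_iff, isOpen_iff_forall_mem_open]
    intro y hy
    have hK : IsCompact ({x | y ∈ φ x} ∩ Sc) := (hfiber_compact y).inter_right hSc
    have hfK : IsCompact (f '' ({x | y ∈ φ x} ∩ Sc)) := hK.image hcont
    have hynot : y ∉ f '' ({x | y ∈ φ x} ∩ Sc) := by
      rintro ⟨x, hxK, hfx⟩
      exact hy ⟨x, hxK.2, hfx⟩
    obtain ⟨V, W, hVo, hWo, hyV, hKW, hVW⟩ :=
      SeparatedNhds.of_isCompact_isCompact isCompact_singleton hfK
        (disjoint_singleton_left.2 hynot)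
    set U : Set X := f ⁻¹' W ∪ Scᶜ with hUdef
    have hUo : IsOpen U := (hWo.preimage hcont).union hSc.isOpen_compl
    have hV'o : IsOpen {y' | ∀ x, y' ∈ φ x → x ∈ U} := by
      have heq : {y' | ∀ x, y' ∈ φ x → x ∈ U} = (⋃ x ∈ Uᶜ, φ x)ᶜ := by
        ext y'
        simp only [mem_setOf_eq, mem_compl_iff, mem_iUnion, not_exists, exists_prop]
        constructor
        · rintro h x ⟨hxU, hy'⟩
          exact hxU (h x hy')
        · intro h x hy' 
          by_contra hxU
          exact h x ⟨hxU, hy'⟩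
      rw [heq]
      exact (himage_closed Uᶜ hUo.isClosed_compl).isOpen_compl
    refine ⟨V ∩ {y' | ∀ x, y' ∈ φ x → x ∈ U}, ?_, hVo.inter hV'o, hyV rfl, ?_⟩
    · rintro y' ⟨hy'V, hy'U⟩ ⟨x, hxS, rfl⟩
      rcases hy'U x (hfφ x) with hxW | hxS'
      · exact hVW.le_bot ⟨hy'V, hxW⟩
      · exact hxS' hxS
    · intro x hx
      by_cases hxS : x ∈ Sc
      · exact Or.inl (hKW ⟨x, ⟨hx, hxS⟩, rfl⟩)
      · exact Or.inr hxS
  · -- compact fibers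
    intro y
    refine IsCompact.of_isClosed_subset (hfiber_compact y)
      (isClosed_singleton.preimage hcont) ?_
    intro x hx
    have : f x = y := hx
    rw [← this]
    exact hfφ x
end

section
/- Every extremally disconnected Hausdorff space E is projective in the category of Hausdorff spaces and perfect maps: if X and Y are Hausdorff spaces, g : Y → X is a perfect surjective map, and π : E → X is a perfect map, then there exists a perfect map f : E → Y with g ∘ f = π. -/
/-!
Gleason's argument. In the pullback `P = E ×_X Y` the projection `p : P → E` is perfect and onto,
so by Zorn's lemma (chains are intersected inside the compact fibres) some closed `D ⊆ P` is
minimal among the closed sets that `p` maps onto `E`. Minimality gives, for every open `U`,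
`p (D ∩ U) ⊆ closure (E \ p (D \ U))`. Disjoint open sets of an extremally disconnected space
have disjoint closures, so two points of `D` with disjoint neighbourhoods have distinct images:
`p` restricted to `D` is a closed continuous bijection, hence a homeomorphism `D ≃ E`, and its
inverse followed by the projection `P → Y` is the lift.
-/

open Filter Topology Set Function

namespace Function.Pullback

variable {A B X : Type*} {f : A → X} {g : B → X}

lemma fst_surjective (hg : Surjective g) : Surjective (fst : f.Pullback g → A) := fun a =>
  let ⟨b, hb⟩ := hg (f a)
  ⟨⟨(a, b), hb.symm⟩, rfl⟩

variable [TopologicalSpace A] [TopologicalSpace B] [TopologicalSpace X]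

lemma isProperMap_fst (hf : Continuous f) (hg : IsProperMap g) :
    IsProperMap (fst : f.Pullback g → A) := by
  rw [isProperMap_iff_ultrafilter]
  refine ⟨continuous_fst.comp continuous_subtype_val, fun 𝒰 a ha => ?_⟩
  have hg𝒰 : Tendsto g (𝒰.map snd) (𝓝 (f a)) := by
    rw [Ultrafilter.coe_map, tendsto_map'_iff, ← pullback_comm_sq]
    exact (hf.tendsto a).comp ha
  obtain ⟨b, hb, hsnd⟩ := hg.ultrafilter_le_nhds_of_tendsto hg𝒰
  refine ⟨⟨(a, b), hb.symm⟩, rfl, ?_⟩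
  refine IsInducing.subtypeVal.tendsto_nhds_iff.2 ?_
  rw [nhds_prod_eq]
  exact ha.prodMk hsnd

lemma isProperMap_snd (hf : IsProperMap f) (hg : Continuous g) :
    IsProperMap (snd : f.Pullback g → B) :=
  (isProperMap_fst hg hf).comp ((Homeomorph.prodComm A B).subtype fun _ => eq_comm).isProperMap

end Function.Pullback

section MinimalClosedSurjOn

variable {P E : Type*} [TopologicalSpace P] {f : P → E}

lemma exists_minimal_isClosed_surjOn (hf : ∀ e, IsCompact (f ⁻¹' {e})) (hsurj : Surjective f) :
    ∃ D, Minimal (fun C => IsClosed C ∧ SurjOn f C univ) D := by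
  refine zorn_superset _ fun c hcS hc => ?_
  rcases c.eq_empty_or_nonempty with rfl | ⟨C₀, hC₀⟩
  · exact ⟨univ, ⟨isClosed_univ, surjOn_univ.2 hsurj⟩, by simp⟩
  refine ⟨⋂₀ c, ⟨isClosed_sInter fun C hC => (hcS hC).1, fun e _ => ?_⟩,
    fun C hC => sInter_subset_of_mem hC⟩
  by_contra he
  have : Nonempty c := ⟨⟨C₀, hC₀⟩⟩
  have hfibre : f ⁻¹' {e} ∩ ⋂ C : c, (C : Set P) = ∅ :=
    eq_empty_iff_forall_notMem.2 fun p ⟨hpe, hp⟩ => he ⟨p, by rwa [sInter_eq_iInter], hpe⟩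
  have hc' : IsChain (· ⊇ ·) c := hc.symm
  obtain ⟨⟨C, hC⟩, hCe⟩ := (hf e).elim_directed_family_closed _ (fun C => (hcS C.2).1)
    hfibre (directedOn_iff_directed.1 hc'.directedOn)
  obtain ⟨p, hp, rfl⟩ := (hcS hC).2 (mem_univ e)
  exact hCe.subset ⟨rfl, hp⟩

variable [TopologicalSpace E] {D : Set P}

lemma Minimal.image_inter_subset_closure_compl_image_diff
    (hD : Minimal (fun C => IsClosed C ∧ SurjOn f C univ) D) (hf : Continuous f) {U : Set P}
    (hU : IsOpen U) : f '' (D ∩ U) ⊆ closure (f '' (D \ U))ᶜ := by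
  rintro _ ⟨d, ⟨hdD, hdU⟩, rfl⟩
  refine mem_closure_iff.2 fun V hV hdV => ?_
  set W := U ∩ f ⁻¹' V
  have hnot : ¬ SurjOn f (D \ W) univ := fun hsurj =>
    (hD.le_of_le ⟨hD.prop.1.sdiff (hU.inter (hV.preimage hf)), hsurj⟩ sdiff_subset hdD).2
      ⟨hdU, hdV⟩
  obtain ⟨e, -, he⟩ := not_subset.1 hnot
  obtain ⟨d', hd', rfl⟩ := hD.prop.2 (mem_univ e)
  have hd'W : d' ∈ W := by_contra fun h => he ⟨d', ⟨hd', h⟩, rfl⟩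
  exact ⟨f d', hd'W.2, fun h => he (image_mono (sdiff_subset_sdiff_right inter_subset_left) h)⟩

lemma Minimal.injOn_of_extremallyDisconnected [T2Space P] [ExtremallyDisconnected E]
    (hD : Minimal (fun C => IsClosed C ∧ SurjOn f C univ) D) (hf : Continuous f)
    (hfc : IsClosedMap f) : InjOn f D := by
  intro d₁ hd₁ d₂ hd₂ hfd
  by_contra hne
  obtain ⟨U₁, U₂, hU₁, hU₂, hd₁U, hd₂U, hU⟩ := t2_separation hne
  have hopen {U : Set P} (hU : IsOpen U) : IsOpen (f '' (D \ U))ᶜ :=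
    (hfc _ (hD.prop.1.sdiff hU)).isOpen_compl
  have hdisj : Disjoint (f '' (D \ U₁))ᶜ (f '' (D \ U₂))ᶜ := by
    refine disjoint_left.2 fun e h₁ h₂ => ?_
    obtain ⟨d, hd, rfl⟩ := hD.prop.2 (mem_univ e)
    by_cases hdU : d ∈ U₁
    · exact h₂ ⟨d, ⟨hd, disjoint_left.1 hU hdU⟩, rfl⟩
    · exact h₁ ⟨d, ⟨hd, hdU⟩, rfl⟩
  exact (ExtremallyDisconnected.disjoint_closure_of_disjoint_isOpen hdisj (hopen hU₁)
    (hopen hU₂)).ne_of_mem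
    (hD.image_inter_subset_closure_compl_image_diff hf hU₁ ⟨d₁, ⟨hd₁, hd₁U⟩, rfl⟩)
    (hD.image_inter_subset_closure_compl_image_diff hf hU₂ ⟨d₂, ⟨hd₂, hd₂U⟩, rfl⟩)
    hfd

lemma Minimal.isHomeomorph_domRestrict [T2Space P] [ExtremallyDisconnected E]
    (hD : Minimal (fun C => IsClosed C ∧ SurjOn f C univ) D) (hf : Continuous f)
    (hfc : IsClosedMap f) : IsHomeomorph (D.domRestrict f) :=
  isHomeomorph_iff_continuous_isClosedMap_bijective.2
    ⟨hf.continuousOn.domRestrict, hfc.comp hD.prop.1.isClosedEmbedding_subtypeVal.isClosedMap,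
      injOn_iff_injective.1 (hD.injOn_of_extremallyDisconnected hf hfc),
      surjOn_iff_surjective.1 hD.prop.2⟩

end MinimalClosedSurjOn

theorem extremallyDisconnected_projective_perfect_general
    {E X Y : Type*} [TopologicalSpace E] [T2Space E] [ExtremallyDisconnected E]
    [TopologicalSpace X] [TopologicalSpace Y] [T2Space Y]
    (g : Y → X) (hgc : Continuous g) (hgcl : IsClosedMap g)
    (hgfib : ∀ x : X, IsCompact (g ⁻¹' {x})) (hgsurj : Function.Surjective g)
    (π : E → X) (hπc : Continuous π) (hπcl : IsClosedMap π)
    (hπfib : ∀ x : X, IsCompact (π ⁻¹' {x})) :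
    ∃ f : E → Y, Continuous f ∧ IsClosedMap f ∧ (∀ y : Y, IsCompact (f ⁻¹' {y})) ∧
      g ∘ f = π := by
  have hgp : IsProperMap g :=
    isProperMap_iff_isClosedMap_and_compact_fibers.2 ⟨hgc, hgcl, hgfib⟩
  have hπp : IsProperMap π :=
    isProperMap_iff_isClosedMap_and_compact_fibers.2 ⟨hπc, hπcl, hπfib⟩
  have hfst := Pullback.isProperMap_fst hπc hgp
  obtain ⟨D, hD⟩ := exists_minimal_isClosed_surjOn
    (fun e => hfst.isCompact_preimage isCompact_singleton) (Pullback.fst_surjective hgsurj)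
  let ψ : D ≃ₜ E := (hD.isHomeomorph_domRestrict hfst.continuous hfst.isClosedMap).homeomorph
  have hf : IsProperMap (Pullback.snd ∘ Subtype.val ∘ ψ.symm) :=
    (Pullback.isProperMap_snd hπp hgc).comp
      (hD.prop.1.isProperMap_subtypeVal.comp ψ.symm.isProperMap)
  refine ⟨_, hf.continuous, hf.isClosedMap, fun y => hf.isCompact_preimage isCompact_singleton,
    funext fun e => ?_⟩
  exact (ψ.symm e : π.Pullback g).2.symm.trans (congrArg π (ψ.apply_symm_apply e))

/-- Every extremally disconnected Hausdorff space is projective in the category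
of Hausdorff spaces and perfect maps. -/
theorem extremallyDisconnected_projective_perfect
    {E X Y : Type*} [TopologicalSpace E] [T2Space E] [ExtremallyDisconnected E]
    [TopologicalSpace X] [T2Space X] [TopologicalSpace Y] [T2Space Y]
    (g : Y → X) (hgc : Continuous g) (hgcl : IsClosedMap g)
    (hgfib : ∀ x : X, IsCompact (g ⁻¹' {x})) (hgsurj : Function.Surjective g)
    (π : E → X) (hπc : Continuous π) (hπcl : IsClosedMap π)
    (hπfib : ∀ x : X, IsCompact (π ⁻¹' {x})) :
    ∃ f : E → Y, Continuous f ∧ IsClosedMap f ∧ (∀ y : Y, IsCompact (f ⁻¹' {y})) ∧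
      g ∘ f = π :=
  extremallyDisconnected_projective_perfect_general g hgc hgcl hgfib hgsurj π hπc hπcl hπfib
end

section
/- A Hausdorff space X is extremally disconnected if and only if every usco mapping φ : X → Set({0,1}) into the two-point discrete space has a continuous selection. (Equivalently, these are further equivalent to: every usco mapping φ : X → Set Y into any Hausdorff space Y has a continuous selection.) -/
/-- A Hausdorff space is extremally disconnected iff every usco mapping into
the two-point discrete space `Bool` has a continuous selection. -/
theorem extremallyDisconnected_iff_usco_bool_selection
    {X : Type*} [TopologicalSpace X] [T2Space X] :
    ExtremallyDisconnected X ↔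
      ∀ φ : X → Set Bool,
        (∀ x, (φ x).Nonempty) →
        (∀ x, IsCompact (φ x)) →
        (∀ U : Set Bool, IsOpen U → IsOpen {x | φ x ⊆ U}) →
        ∃ f : X → Bool, Continuous f ∧ ∀ x, f x ∈ φ x := by
  constructor
  · intro hED φ hne _hcpt husc
    set A : Set X := {x | φ x ⊆ {true}} with hA
    set B : Set X := {x | φ x ⊆ {false}} with hB
    have hAopen : IsOpen A := husc {true} (isOpen_discrete _)
    have hBopen : IsOpen B := husc {false} (isOpen_discrete _)
    have hAB : Disjoint A B := by
      rw [Set.disjoint_left]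
      intro x hxA hxB
      obtain ⟨b, hb⟩ := hne x
      have h1 := hxA hb
      have h2 := hxB hb
      simp at h1 h2
      rw [h1] at h2; exact Bool.noConfusion h2
    have hclA : IsClopen (closure A) :=
      ⟨isClosed_closure, hED.open_closure A hAopen⟩
    refine ⟨(closure A).boolIndicator, ?_, ?_⟩
    · exact (continuous_boolIndicator_iff_isClopen _).2 hclA
    · intro x
      by_cases hx : x ∈ closure A
      · rw [Set.boolIndicator, if_pos hx]
        by_contra htrue
        have hfalse : φ x ⊆ {false} := by
          intro b hb
          cases b
          · rfl
          · exact absurd hb htrue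
        have hxB : x ∈ B := hfalse
        have : closure A ⊆ Bᶜ := by
          apply closure_minimal _ hBopen.isClosed_compl
          exact Set.disjoint_left.1 hAB
        exact this hx hxB
      · rw [Set.boolIndicator, if_neg hx]
        by_contra hfalse
        have htrue : φ x ⊆ {true} := by
          intro b hb
          cases b
          · exact absurd hb hfalse
          · rfl
        exact hx (subset_closure htrue)
  · intro hsel
    constructor
    intro U hU
    set φ : X → Set Bool :=
      fun x => {b | (b = true ∧ x ∈ closure U) ∨ (b = false ∧ x ∉ U)} with hφ
    have hne : ∀ x, (φ x).Nonempty := by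
      intro x
      by_cases hx : x ∈ closure U
      · exact ⟨true, Or.inl ⟨rfl, hx⟩⟩
      · exact ⟨false, Or.inr ⟨rfl, fun h => hx (subset_closure h)⟩⟩
    have hcpt : ∀ x, IsCompact (φ x) := fun x => (φ x).toFinite.isCompact
    have husc : ∀ V : Set Bool, IsOpen V → IsOpen {x | φ x ⊆ V} := by
      intro V _
      by_cases ht : true ∈ V <;> by_cases hf : false ∈ V
      · have : {x | φ x ⊆ V} = Set.univ := by
          ext x; simp only [Set.mem_setOf_eq, Set.mem_univ, iff_true]
          intro b hb
          cases b
          · exact hf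
          · exact ht
        rw [this]; exact isOpen_univ
      · have : {x | φ x ⊆ V} = U := by
          ext x
          simp only [Set.mem_setOf_eq]
          constructor
          · intro h
            by_contra hxU
            exact hf (h (Or.inr ⟨rfl, hxU⟩))
          · intro hxU b hb
            rcases hb with ⟨hb, _⟩ | ⟨hb, hx⟩
            · rw [hb]; exact ht
            · exact absurd hxU hx
        rw [this]; exact hU
      · have : {x | φ x ⊆ V} = (closure U)ᶜ := by
          ext x
          simp only [Set.mem_setOf_eq, Set.mem_compl_iff]
          constructor
          · intro h hx
            exact ht (h (Or.inl ⟨rfl, hx⟩))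
          · intro hx b hb
            rcases hb with ⟨hb, hx'⟩ | ⟨hb, _⟩
            · exact absurd hx' hx
            · rw [hb]; exact hf
        rw [this]; exact isClosed_closure.isOpen_compl
      · have : {x | φ x ⊆ V} = ∅ := by
          ext x
          simp only [Set.mem_setOf_eq, Set.mem_empty_iff_false, iff_false]
          intro h
          obtain ⟨b, hb⟩ := hne x
          have := h hb
          cases b
          · exact hf this
          · exact ht this
        rw [this]; exact isOpen_empty
    obtain ⟨f, hfcont, hfsel⟩ := hsel φ hne hcpt husc
    have key : f ⁻¹' {true} = closure U := by
      apply Set.Subset.antisymm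
      · intro x hx
        have := hfsel x
        rw [Set.mem_preimage, Set.mem_singleton_iff] at hx
        rw [hx] at this
        rcases this with ⟨_, h⟩ | ⟨h, _⟩
        · exact h
        · exact Bool.noConfusion h
      · have hUsub : U ⊆ f ⁻¹' {true} := by
          intro x hx
          have := hfsel x
          rcases this with ⟨h, _⟩ | ⟨_, h⟩
          · exact h
          · exact absurd hx h
        have hclosed : IsClosed (f ⁻¹' {true}) :=
          IsClosed.preimage hfcont (isClosed_discrete _)
        exact closure_minimal hUsub hclosed
    rw [← key]
    exact hfcont.isOpen_preimage _ (isOpen_discrete _)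
end

section
/- The Čech–Stone compactification of a regular Hausdorff extremally disconnected space is extremally disconnected: if X is a regular Hausdorff extremally disconnected space, then βX (the Stone–Čech compactification of X) is extremally disconnected. -/
/-- The Stone–Čech compactification of a regular Hausdorff extremally
disconnected space is extremally disconnected. -/
theorem extremallyDisconnected_stoneCech
    {X : Type*} [TopologicalSpace X] [T2Space X] [RegularSpace X]
    [ExtremallyDisconnected X] :
    ExtremallyDisconnected (StoneCech X) := by
  constructor
  intro U hU
  set ι : X → StoneCech X := stoneCechUnit with hι
  have hιc : Continuous ι := continuous_stoneCechUnit
  have hιd : Dense (Set.range ι) := denseRange_stoneCechUnit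
  set s : Set X := ι ⁻¹' U with hsdef
  have hs : IsOpen s := hU.preimage hιc
  set V : Set X := closure s with hVdef
  have hV : IsClopen V := ⟨isClosed_closure, ExtremallyDisconnected.open_closure s hs⟩
  have hχ : Continuous V.boolIndicator := (continuous_boolIndicator_iff_isClopen V).mpr hV
  set f : StoneCech X → Bool := stoneCechExtend hχ with hfdef
  have hf : Continuous f := continuous_stoneCechExtend hχ
  have hext : f ∘ ι = V.boolIndicator := stoneCechExtend_extends hχ
  have hextx : ∀ x : X, f (ι x) = V.boolIndicator x := fun x => congrFun hext x
  have himgs : ι '' s ⊆ f ⁻¹' {true} := by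
    rintro _ ⟨x, hx, rfl⟩
    have : x ∈ V := subset_closure hx
    simp [hextx x, (V.mem_iff_boolIndicator x).mp this]
  have hclosedpre : IsClosed (f ⁻¹' {true}) := (isClosed_discrete _).preimage hf
  have hopenpre : IsOpen (f ⁻¹' {true}) := (isOpen_discrete _).preimage hf
  have key : closure U = f ⁻¹' {true} := by
    apply Set.Subset.antisymm
    · -- closure U ⊆ f⁻¹{true}
      have h1 : U ⊆ closure (U ∩ Set.range ι) := hιd.open_subset_closure_inter hU
      have h2 : U ∩ Set.range ι ⊆ f ⁻¹' {true} := by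
        rintro _ ⟨hxU, x, rfl⟩
        exact himgs ⟨x, hxU, rfl⟩
      calc closure U ⊆ closure (closure (U ∩ Set.range ι)) := closure_mono h1
        _ = closure (U ∩ Set.range ι) := closure_closure
        _ ⊆ closure (f ⁻¹' {true}) := closure_mono h2
        _ = f ⁻¹' {true} := hclosedpre.closure_eq
    · -- f⁻¹{true} ⊆ closure U
      have h1 : f ⁻¹' {true} ⊆ closure (f ⁻¹' {true} ∩ Set.range ι) :=
        hιd.open_subset_closure_inter hopenpre
      have h2 : f ⁻¹' {true} ∩ Set.range ι ⊆ ι '' V := by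
        rintro _ ⟨hxt, x, rfl⟩
        refine ⟨x, ?_, rfl⟩
        have : V.boolIndicator x = true := by rw [← hextx x]; exact hxt
        exact (V.mem_iff_boolIndicator x).mpr this
      have h3 : ι '' V ⊆ closure (ι '' s) := by
        rw [hVdef]
        exact (image_closure_subset_closure_image hιc)
      have h4 : ι '' s ⊆ U := fun _ ⟨x, hx, hxe⟩ => hxe ▸ hx
      calc f ⁻¹' {true} ⊆ closure (f ⁻¹' {true} ∩ Set.range ι) := h1
        _ ⊆ closure (ι '' V) := closure_mono h2
        _ ⊆ closure (closure (ι '' s)) := closure_mono h3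
        _ = closure (ι '' s) := closure_closure
        _ ⊆ closure U := closure_mono h4
  rw [key]
  exact hopenpre
end

section
/- Let K be a compact Hausdorff extremally disconnected space and A ⊆ K a dense subspace. Then K is the Čech–Stone compactification of A; in particular, for every compact Hausdorff space Y, every continuous map g : A → Y extends to a continuous map f : K → Y. -/
/-!
Let `G` be the closure in `K × Y` of the graph of `g`. Since `Y` is compact, the projection
`G → K` is closed, and its image contains the dense set `A`, so it is a continuous surjection
between compact Hausdorff spaces. By Gleason's theorem the extremally disconnected space `K` is
projective, so this projection has a continuous section `s`, and `f := Prod.snd ∘ s` extends `g`: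
over a point of `A` the only point of `G` lies on the graph, because the graph of a continuous map
into a Hausdorff space is closed.
-/

open Set Function Topology

universe u v

theorem ExtremallyDisconnected.exists_continuous_rightInverse
    {K : Type u} {E : Type v} [TopologicalSpace K] [CompactSpace K] [T2Space K]
    [ExtremallyDisconnected K] [TopologicalSpace E] [CompactSpace E] [T2Space E]
    {π : E → K} (hπ : Continuous π) (hπ_surj : Surjective π) :
    ∃ s : K → E, Continuous s ∧ RightInverse s π := by
  -- `CompactT2.Projective` only quantifies over spaces in the universe of `K`.
  have : ExtremallyDisconnected (ULift.{v} K) :=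
    extremallyDisconnected_of_homeo Homeomorph.ulift.symm
  obtain ⟨s, hs, hπs⟩ := CompactT2.ExtremallyDisconnected.projective (A := ULift.{v} K)
    (Y := ULift.{u} E) (f := id) (g := ULift.up ∘ π ∘ ULift.down) continuous_id
    (continuous_uliftUp.comp (hπ.comp continuous_uliftDown))
    (fun z => let ⟨e, he⟩ := hπ_surj z.down; ⟨ULift.up e, congrArg ULift.up he⟩)
  exact ⟨ULift.down ∘ s ∘ ULift.up, continuous_uliftDown.comp (hs.comp continuous_uliftUp),
    fun x => congrArg ULift.down (congrFun hπs (ULift.up x))⟩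

section Graph

variable {X Y : Type*} [TopologicalSpace X] [TopologicalSpace Y]

theorem fst_image_closure_range_graph [CompactSpace Y] (A : Set X) (g : A → Y) :
    Prod.fst '' closure (range fun a : A => ((a : X), g a)) = closure A := by
  rw [← (isClosedMap_fst_of_compactSpace (X := X) (Y := Y)).closure_image_eq_of_continuous
    continuous_fst, ← range_comp]
  simp [comp_def]

theorem eq_of_mem_closure_range_graph [T2Space Y] {A : Set X} {g : A → Y} (hg : Continuous g)
    {a : A} {y : Y} (h : ((a : X), y) ∈ closure (range fun a : A => ((a : X), g a))) :
    y = g a := by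
  let ι : A × Y → X × Y := Prod.map Subtype.val id
  have hι : IsInducing ι := IsInducing.subtypeVal.prodMap IsInducing.id
  have hgraph : ι '' {p | g p.1 = p.2} = range fun a : A => ((a : X), g a) := by
    ext; simp [ι]
  have hmem : (a, y) ∈ closure {p : A × Y | g p.1 = p.2} := by
    rw [hι.closure_eq_preimage_closure_image, hgraph]
    exact h
  exact ((isClosed_eq (by fun_prop) continuous_snd).closure_subset hmem :).symm

end Graph

/-- A compact Hausdorff extremally disconnected space is the Čech–Stone
compactification of each of its dense subspaces: every continuous map from a
dense subspace into a compact Hausdorff space extends continuously. -/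
theorem compact_extremallyDisconnected_stoneCech_of_dense
    {K : Type*} [TopologicalSpace K] [CompactSpace K] [T2Space K]
    [ExtremallyDisconnected K]
    (A : Set K) (hA : Dense A)
    (Y : Type*) [TopologicalSpace Y] [CompactSpace Y] [T2Space Y]
    (g : A → Y) (hg : Continuous g) :
    ∃ f : K → Y, Continuous f ∧ ∀ a : A, f a = g a := by
  set G := closure (range fun a : A => ((a : K), g a))
  have : CompactSpace G := isCompact_iff_compactSpace.mp isClosed_closure.isCompact
  have hπ_surj : Surjective fun p : G => p.1.1 := fun x => by
    obtain ⟨p, hp, rfl⟩ : x ∈ Prod.fst '' G := by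
      rw [fst_image_closure_range_graph, hA.closure_eq]
      trivial
    exact ⟨⟨p, hp⟩, rfl⟩
  obtain ⟨s, hs, hπs⟩ :=
    ExtremallyDisconnected.exists_continuous_rightInverse (by fun_prop) hπ_surj
  refine ⟨fun x => (s x).1.2, by fun_prop, fun a => eq_of_mem_closure_range_graph hg ?_⟩
  have hsa : (s a : K × Y).1 = a := hπs a
  have hmem := (s a).2
  rwa [← Prod.mk.eta (p := (s a).1), hsa] at hmem
end

section
/- Let X be an extremally disconnected regular Hausdorff space, Y a regular Hausdorff space, and φ : X → Set Y an usco mapping. Then for each dense subset A ⊆ X, each continuous selection for the restriction φ↾A can be extended to a continuous selection for φ. -/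
/-!
On the dense set `A` the selection `g` pushes the trace filter `comap (↑) (𝓝 x)` forward to a
filter on `Y` that, by upper semicontinuity, lies below `𝓝ˢ (φ x)`; compactness of `φ x` gives it
a cluster point in `φ x`. Extremal disconnectedness makes this cluster point unique: two distinct
ones would put `x` in the closures of two disjoint open sets. A filter below `𝓝ˢ K`, `K` compact,
with a unique cluster point converges to it, so `g` has a limit along every trace filter, and the
extension of `g` by these limits is continuous because `Y` is regular.
-/

open Filter Topology Set

section

variable {α X Y : Type*} [TopologicalSpace X] [TopologicalSpace Y]

theorem IsCompact.exists_clusterPt_of_le_nhdsSet_s15 {K : Set X} (hK : IsCompact K)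
    {l : Filter X} [NeBot l] (hl : l ≤ 𝓝ˢ K) : ∃ x ∈ K, ClusterPt x l := by
  by_contra! h
  have hdisj : Disjoint (𝓝ˢ K) l :=
    hK.disjoint_nhdsSet_left.2 fun x hx =>
      not_not.1 fun hx' => h x hx (clusterPt_iff_not_disjoint.2 hx')
  exact NeBot.ne ‹_› (disjoint_self.1 (hdisj.mono_left hl))

theorem IsCompact.le_nhds_of_unique_clusterPt_of_le_nhdsSet_s15 {K : Set X} (hK : IsCompact K)
    {l : Filter X} {y : X} (hl : l ≤ 𝓝ˢ K) (h : ∀ x ∈ K, ClusterPt x l → x = y) : l ≤ 𝓝 y := by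
  refine le_iff_ultrafilter.2 fun u hu => ?_
  obtain ⟨x, hxK, hx⟩ := hK.exists_clusterPt_of_le_nhdsSet_s15 (hu.trans hl)
  rwa [← h x hxK (hx.mono hu), ← Ultrafilter.clusterPt_iff]

theorem map_comap_nhds_le_nhdsSet_of_isOpen_setOf_subset {φ : X → Set Y}
    (husc : ∀ U : Set Y, IsOpen U → IsOpen {x | φ x ⊆ U}) {i : α → X} {g : α → Y}
    (hsel : ∀ a, g a ∈ φ (i a)) (x : X) : map g (comap i (𝓝 x)) ≤ 𝓝ˢ (φ x) := by
  rw [(hasBasis_nhdsSet (φ x)).ge_iff]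
  rintro U ⟨hU, hxU⟩
  refine mem_map.2 (mem_of_superset (preimage_mem_comap ((husc U hU).mem_nhds hxU)) ?_)
  exact fun a ha => ha (hsel a)

theorem mem_closure_of_mapClusterPt_comap_nhds {i : α → X} {g : α → Y} {x : X} {y : Y}
    (h : MapClusterPt y (comap i (𝓝 x)) g) {V : Set Y} (hV : V ∈ 𝓝 y) {W : Set X}
    (hVW : g ⁻¹' V ⊆ i ⁻¹' W) : x ∈ closure W := by
  refine mem_closure_iff_nhds.2 fun N hN => ?_
  obtain ⟨a, hgV, haN⟩ := ((h.frequently hV).and_eventually (preimage_mem_comap hN)).exists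
  exact ⟨i a, haN, hVW hgV⟩

theorem IsDenseInducing.eq_of_mapClusterPt_comap_nhds [ExtremallyDisconnected X] [T2Space Y]
    [TopologicalSpace α] {i : α → X} (hi : IsDenseInducing i) {g : α → Y} (hg : Continuous g)
    {x : X} {y₁ y₂ : Y} (h₁ : MapClusterPt y₁ (comap i (𝓝 x)) g)
    (h₂ : MapClusterPt y₂ (comap i (𝓝 x)) g) : y₁ = y₂ := by
  by_contra hne
  obtain ⟨V₁, V₂, hV₁, hV₂, hy₁, hy₂, hV⟩ := t2_separation hne
  obtain ⟨W₁, hW₁, hW₁V₁⟩ := hi.isInducing.isOpen_iff.1 (hV₁.preimage hg)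
  obtain ⟨W₂, hW₂, hW₂V₂⟩ := hi.isInducing.isOpen_iff.1 (hV₂.preimage hg)
  have hW : Disjoint W₁ W₂ := by
    rw [disjoint_iff_inter_eq_empty, ← not_nonempty_iff_eq_empty]
    intro hW₁₂
    obtain ⟨a, ha₁, ha₂⟩ := hi.dense.exists_mem_open (hW₁.inter hW₂) hW₁₂
    exact disjoint_left.1 hV (hW₁V₁.subset ha₁) (hW₂V₂.subset ha₂)
  exact disjoint_left.1 (ExtremallyDisconnected.disjoint_closure_of_disjoint_isOpen hW hW₁ hW₂)
    (mem_closure_of_mapClusterPt_comap_nhds h₁ (hV₁.mem_nhds hy₁) hW₁V₁.ge)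
    (mem_closure_of_mapClusterPt_comap_nhds h₂ (hV₂.mem_nhds hy₂) hW₂V₂.ge)

end

theorem selection_extension_of_extremallyDisconnected_regular_general
    {X Y : Type*} [TopologicalSpace X]
    [ExtremallyDisconnected X]
    [TopologicalSpace Y] [T2Space Y] [RegularSpace Y]
    (φ : X → Set Y)
    (hcomp : ∀ x, IsCompact (φ x))
    (husc : ∀ U : Set Y, IsOpen U → IsOpen {x | φ x ⊆ U})
    (A : Set X) (hA : Dense A)
    (g : A → Y) (hg : Continuous g) (hgsel : ∀ a : A, g a ∈ φ a) :
    ∃ f : X → Y, Continuous f ∧ (∀ x, f x ∈ φ x) ∧ ∀ a : A, f a = g a := by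
  have hi := hA.isDenseInducing_val
  have hlim : ∀ x, ∃ y ∈ φ x, Tendsto g (comap (↑) (𝓝 x)) (𝓝 y) := by
    intro x
    have hle := map_comap_nhds_le_nhdsSet_of_isOpen_setOf_subset husc hgsel x
    have := hi.comap_nhds_neBot x
    obtain ⟨y, hy, hcl⟩ := (hcomp x).exists_clusterPt_of_le_nhdsSet_s15 hle
    exact ⟨y, hy, (hcomp x).le_nhds_of_unique_clusterPt_of_le_nhdsSet_s15 hle
      fun z _ hz => hi.eq_of_mapClusterPt_comap_nhds hg hz hcl⟩
  choose y hyφ hy using hlim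
  exact ⟨hi.extend g, hi.continuous_extend fun x => ⟨y x, hy x⟩,
    fun x => (hi.extend_eq_of_tendsto (hy x)).symm ▸ hyφ x, hi.extend_eq hg⟩

/-- Extension of densely defined continuous selections for usco mappings into
regular Hausdorff spaces, on extremally disconnected regular Hausdorff domains. -/
theorem selection_extension_of_extremallyDisconnected_regular
    {X Y : Type*} [TopologicalSpace X] [T2Space X] [RegularSpace X]
    [ExtremallyDisconnected X]
    [TopologicalSpace Y] [T2Space Y] [RegularSpace Y]
    (φ : X → Set Y)
    (hne : ∀ x, (φ x).Nonempty)
    (hcomp : ∀ x, IsCompact (φ x))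
    (husc : ∀ U : Set Y, IsOpen U → IsOpen {x | φ x ⊆ U})
    (A : Set X) (hA : Dense A)
    (g : A → Y) (hg : Continuous g) (hgsel : ∀ a : A, g a ∈ φ a) :
    ∃ f : X → Y, Continuous f ∧ (∀ x, f x ∈ φ x) ∧ ∀ a : A, f a = g a :=
  selection_extension_of_extremallyDisconnected_regular_general φ hcomp husc A hA g hg hgsel
end

section
/- Let X be a regular Hausdorff space such that for every dense subset A ⊆ X, every continuous map from A to the two-point discrete space {0,1} extends to a continuous map on X. Then X is extremally disconnected. -/
/-- If every continuous map from a dense subset of a regular Hausdorff space `X`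
into the two-point discrete space extends continuously to `X`, then `X` is
extremally disconnected. -/
theorem extremallyDisconnected_of_dense_bool_extension
    {X : Type*} [TopologicalSpace X] [T2Space X] [RegularSpace X]
    (h : ∀ A : Set X, Dense A → ∀ g : A → Bool, Continuous g →
      ∃ f : X → Bool, Continuous f ∧ ∀ a : A, f a = g a) :
    ExtremallyDisconnected X := by
  classical
  constructor
  intro U hU
  set A : Set X := U ∪ (closure U)ᶜ with hA
  have hdense : Dense A := by
    intro x
    by_cases hx : x ∈ closure U
    · exact closure_mono Set.subset_union_left hx
    · exact subset_closure (Or.inr hx)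
  have hgc : Continuous (fun a : A => decide ((a : X) ∈ U)) := by
    apply IsLocallyConstant.continuous
    rw [IsLocallyConstant.iff_isOpen_fiber]
    intro b
    cases b
    · have he : (fun a : A => decide ((a : X) ∈ U)) ⁻¹' {false}
          = (Subtype.val : A → X) ⁻¹' (closure U)ᶜ := by
        ext a
        simp only [Set.mem_preimage, Set.mem_singleton_iff, decide_eq_false_iff_not,
          Set.mem_compl_iff]
        classical
  constructor
        · intro ha
          rcases a.2 with h1 | h1
          · exact absurd h1 ha
          · exact h1
        · intro ha h1
          exact ha (subset_closure h1)
      show IsOpen ((fun a : A => decide ((a : X) ∈ U)) ⁻¹' {false})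
      rw [he]
      exact (isClosed_closure.isOpen_compl).preimage continuous_subtype_val
    · have he : (fun a : A => decide ((a : X) ∈ U)) ⁻¹' {true}
          = (Subtype.val : A → X) ⁻¹' U := by
        ext a
        simp
      show IsOpen ((fun a : A => decide ((a : X) ∈ U)) ⁻¹' {true})
      rw [he]
      exact hU.preimage continuous_subtype_val
  obtain ⟨f, hf, hfa⟩ := h A hdense _ hgc
  have hkey : closure U = f ⁻¹' {true} := by
    apply subset_antisymm
    · apply closure_minimal
      · intro x hx
        have hxA : x ∈ A := Or.inl hx
        have := hfa ⟨x, hxA⟩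
        simp only [Set.mem_preimage, Set.mem_singleton_iff]
        rw [this]
        simpa using hx
      · exact (isClosed_discrete {true}).preimage hf
    · intro x hx
      by_contra hxc
      have hxA : x ∈ A := Or.inr hxc
      have := hfa ⟨x, hxA⟩
      have hxU : x ∉ U := fun hxu => hxc (subset_closure hxu)
      simp only [Set.mem_preimage, Set.mem_singleton_iff] at hx
      rw [hx] at this
      simp [hxU] at this
  rw [hkey]
  exact (isOpen_discrete {true}).preimage hf
end
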